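/- arXiv:1601.07307 — 6 statements merged into one kernel-verified Lean document; each statement's English description precedes it below -/
import Mathlib

section
/- Let M be a countably infinite graph that is ≥k-homogeneous but not 1-homogeneous, with K_∞ embeddable in M, and let p be the infinite vertex orbit and q the finite vertex orbit. Then every vertex a in p is non-adjacent to at most k + |q| − 1 vertices of M. -/
open SimpleGraph

/-- `M` is `n`-homogeneous: every isomorphism between induced subgraphs on
finite vertex sets of size `n` extends to an automorphism of `M`. -/
def IsNHom {V : Type*} (M : SimpleGraph V) (n : ℕ) : Prop :=
  ∀ (s t : Set V), s.Finite → t.Finite → s.ncard = n → t.ncard = n →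
    ∀ f : M.induce s ≃g M.induce t, ∃ g : M ≃g M, ∀ x : s, g x.val = (f x).val

/-- `M` is `≥k`-homogeneous: `n`-homogeneous for all `n ≥ k`. -/
def GeqHom {V : Type*} (M : SimpleGraph V) (k : ℕ) : Prop :=
  ∀ n, k ≤ n → IsNHom M n

/-- `M` is homogeneous: `n`-homogeneous for all `n`. -/
def IsHomogeneous {V : Type*} (M : SimpleGraph V) : Prop :=
  ∀ n, IsNHom M n

/-- The countably infinite complete graph embeds into `M` as an induced subgraph. -/
def HasKInf {V : Type*} (M : SimpleGraph V) : Prop :=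
  Nonempty ((⊤ : SimpleGraph ℕ) ↪g M)

/-- `a` and `b` lie in the same orbit of vertices under `Aut(M)`. -/
def SameOrbit {V : Type*} (M : SimpleGraph V) (a b : V) : Prop :=
  ∃ g : M ≃g M, g a = b

/-- `s` is an orbit of vertices under `Aut(M)`. -/
def IsOrbit {V : Type*} (M : SimpleGraph V) (s : Set V) : Prop :=
  ∃ a, s = {b | SameOrbit M a b}

/-- The ordered pairs `(a,b)` and `(c,d)` lie in the same orbit under `Aut(M)`. -/
def SamePairOrbit {V : Type*} (M : SimpleGraph V) (a b c d : V) : Prop :=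
  ∃ g : M ≃g M, g a = c ∧ g b = d

/-- `a` and `b` lie in a common induced copy of `K_∞`. -/
def InCommonKInf {V : Type*} (M : SimpleGraph V) (a b : V) : Prop :=
  ∃ f : (⊤ : SimpleGraph ℕ) ↪g M, a ∈ Set.range f ∧ b ∈ Set.range f

/-- The 2-orbit `q₁`: adjacent pairs lying in a common induced `K_∞`. -/
def Q1Rel {V : Type*} (M : SimpleGraph V) (a b : V) : Prop :=
  M.Adj a b ∧ InCommonKInf M a b

/-- The 2-orbit `q₂`: adjacent pairs not lying in a common induced `K_∞`. -/
def Q2Rel {V : Type*} (M : SimpleGraph V) (a b : V) : Prop :=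
  M.Adj a b ∧ ¬ InCommonKInf M a b

/-- The 2-orbit `p₁`: non-adjacent pairs `(a,b)` such that `b` is adjacent to at
most `k-1` vertices of any induced `K_∞` containing `a`. -/
def P1Rel {V : Type*} (M : SimpleGraph V) (k : ℕ) (a b : V) : Prop :=
  a ≠ b ∧ ¬ M.Adj a b ∧
    ∀ f : (⊤ : SimpleGraph ℕ) ↪g M, a ∈ Set.range f →
      {c | c ∈ Set.range f ∧ M.Adj b c}.Finite ∧
      {c | c ∈ Set.range f ∧ M.Adj b c}.ncard ≤ k - 1

/-- The 2-orbit `p₂`: the remaining non-adjacent pairs of distinct vertices. -/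
def P2Rel {V : Type*} (M : SimpleGraph V) (k : ℕ) (a b : V) : Prop :=
  a ≠ b ∧ ¬ M.Adj a b ∧ ¬ P1Rel M k a b

/-- The graph `G_t` on `ℤ × {1,…,t}`, with `(a,i)` adjacent to `(b,j)` iff `a ≠ b`. -/
def Gt (t : ℕ) : SimpleGraph (ℤ × Fin t) where
  Adj x y := x.1 ≠ y.1
  symm := ⟨fun _ _ h => Ne.symm h⟩
  loopless := ⟨fun _ h => h rfl⟩

/-- The graph `H_{t,2}`: two copies of `G_t`, with `(a,i)` in the first copy
adjacent to `(b,j)` in the second copy iff `a = b`. -/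
def Ht2 (t : ℕ) : SimpleGraph ((ℤ × Fin t) ⊕ (ℤ × Fin t)) where
  Adj x y := match x, y with
    | .inl a, .inl b => a.1 ≠ b.1
    | .inr a, .inr b => a.1 ≠ b.1
    | .inl a, .inr b => a.1 = b.1
    | .inr a, .inl b => a.1 = b.1
  symm := by
    constructor
    rintro (a | a) (b | b) h <;> simp_all <;> omega
  loopless := by
    constructor
    rintro (a | a) h <;> exact h rfl

/-- The graph `H_{1,2}`: two disjoint copies of `K_∞` joined by a perfect matching. -/
def H12 : SimpleGraph (ℤ × Fin 2) where
  Adj x y := (x.2 = y.2 ∧ x.1 ≠ y.1) ∨ (x.1 = y.1 ∧ x.2 ≠ y.2)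
  symm := by
    constructor
    rintro x y (⟨h1, h2⟩ | ⟨h1, h2⟩)
    · exact Or.inl ⟨h1.symm, h2.symm⟩
    · exact Or.inr ⟨h1.symm, h2.symm⟩
  loopless := by
    constructor
    rintro x (⟨_, h⟩ | ⟨_, h⟩) <;> exact h rfl


/-! Vertices lying in infinite cliques form a single orbit (by `k`-homogeneity, as any bijection
between two `k`-cliques is an isomorphism), and since `K_∞ ⊆ M` while `q` is finite this orbit
is `p`. An edge between `q` and `p` would give every vertex of a copy of `K_∞` a neighbour in
the finite set `q`, so some vertex of `q` would see infinitely many of them and lie in an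
infinite clique itself. Finally, for `a ∈ p` and `b ∈ q`: if `a` had `k` non-neighbours `B` in
`p`, then `b` is also non-adjacent to all of `B`, so swapping `a` and `b` is an automorphism of
the subgraph induced on `{a, b} ∪ B`; by `≥k`-homogeneity it extends to an automorphism of `M`
moving `a` into `q`. So `a` has fewer than `k` non-neighbours in `p`, and at most `|q|` in `q`. -/

theorem Set.Infinite.exists_finite_subset_mem_ncard_eq {α : Type*} {s : Set α} (hs : s.Infinite)
    {x : α} (hx : x ∈ s) {n : ℕ} (hn : 1 ≤ n) :
    ∃ r ⊆ s, x ∈ r ∧ r.Finite ∧ r.ncard = n := by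
  obtain ⟨r, hxr, hrs, hr⟩ := Set.exists_superset_subset_encard_eq
    (k := n) (Set.singleton_subset_iff.mpr hx) (by simpa using hn) (by simp [hs.encard_eq])
  exact ⟨r, hrs, hxr rfl, Set.finite_of_encard_eq_coe hr, by simp [Set.ncard_def, hr]⟩

theorem Set.encard_le_of_encard_inter_lt {α : Type*} {s p q : Set α} {k : ℕ}
    (hpq : p ∪ q = Set.univ) (hq : q.Finite) (hs : (s ∩ p).encard < k) :
    s.encard ≤ (k + q.ncard - 1 : ℕ) := by
  have hk : 0 < k := by exact_mod_cast pos_of_gt hs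
  have hsub : s ⊆ (s ∩ p) ∪ q :=
    fun w hw => (hpq ▸ Set.mem_univ w : w ∈ p ∪ q).imp_left fun hwp => ⟨hw, hwp⟩
  rw [← ENat.lt_add_one_iff (ENat.natCast_ne_top _)]
  calc s.encard ≤ (s ∩ p).encard + q.encard :=
        (Set.encard_le_encard hsub).trans (Set.encard_union_le _ _)
    _ < k + q.encard := (ENat.add_lt_add_iff_right hq.encard_lt_top.ne).mpr hs
    _ = ((k + q.ncard - 1 : ℕ) : ℕ∞) + 1 := by
        rw [← hq.cast_ncard_eq]
        norm_cast
        omega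

namespace SimpleGraph

variable {V : Type*} {M : SimpleGraph V}

theorem SameOrbit.refl (a : V) : SameOrbit M a a := ⟨Iso.refl, rfl⟩

theorem SameOrbit.symm {a b : V} (h : SameOrbit M a b) : SameOrbit M b a := by
  obtain ⟨g, rfl⟩ := h
  exact ⟨g.symm, g.symm_apply_apply a⟩

theorem SameOrbit.trans {a b c : V} (hab : SameOrbit M a b) (hbc : SameOrbit M b c) :
    SameOrbit M a c := by
  obtain ⟨g, rfl⟩ := hab
  obtain ⟨g', rfl⟩ := hbc
  exact ⟨g.trans g', rfl⟩

theorem IsOrbit.mem_iff_sameOrbit {p : Set V} (hp : IsOrbit M p) {x y : V} (hx : x ∈ p) :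
    y ∈ p ↔ SameOrbit M x y := by
  obtain ⟨a, rfl⟩ := hp
  exact ⟨fun hy => hx.symm.trans hy, fun hxy => hx.trans hxy⟩

theorem IsOrbit.nonempty {p : Set V} (hp : IsOrbit M p) : p.Nonempty := by
  obtain ⟨a, rfl⟩ := hp
  exact ⟨a, SameOrbit.refl a⟩

theorem IsOrbit.eq_of_not_disjoint {p q : Set V} (hp : IsOrbit M p) (hq : IsOrbit M q)
    (h : ¬ Disjoint p q) : p = q := by
  obtain ⟨x, hxp, hxq⟩ := Set.not_disjoint_iff.mp h
  ext y
  rw [hp.mem_iff_sameOrbit hxp, hq.mem_iff_sameOrbit hxq]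

theorem IsOrbit.exists_adj_of_adj {p q : Set V} (hp : IsOrbit M p) (hq : IsOrbit M q)
    {u v w : V} (hu : u ∈ q) (hv : v ∈ p) (huv : M.Adj u v) (hw : w ∈ p) :
    ∃ u' ∈ q, M.Adj u' w := by
  obtain ⟨g, rfl⟩ := (hp.mem_iff_sameOrbit hv).mp hw
  exact ⟨g u, (hq.mem_iff_sameOrbit hu).mpr ⟨g, rfl⟩, g.map_adj_iff.mpr huv⟩

theorem IsNHom.sameOrbit_of_iso {n : ℕ} (hM : IsNHom M n) {s t : Set V} (hs : s.Finite)
    (hsn : s.ncard = n) (f : M.induce s ≃g M.induce t) (x : s) : SameOrbit M x (f x) := by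
  have hst : s.ncard = t.ncard := Set.ncard_congr' f.toEquiv
  have := hs.to_subtype
  have ht : t.Finite := Set.finite_coe_iff.mp (Finite.of_equiv s f.toEquiv)
  obtain ⟨g, hg⟩ := hM s t hs ht hsn (hst ▸ hsn) f
  exact ⟨g, hg x⟩

theorem IsNHom.sameOrbit_of_isClique {n : ℕ} (hM : IsNHom M n) {s t : Set V}
    (hs : M.IsClique s) (ht : M.IsClique t) (hsf : s.Finite) (htf : t.Finite)
    (hsn : s.ncard = n) (htn : t.ncard = n) {x y : V} (hx : x ∈ s) (hy : y ∈ t) :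
    SameOrbit M x y := by
  classical
  have := hsf.to_subtype
  have := htf.to_subtype
  obtain ⟨e₀⟩ := Finite.card_eq.mp (show Nat.card s = Nat.card t by
    rw [Nat.card_coe_set_eq, Nat.card_coe_set_eq, hsn, htn])
  let e : s ≃ t := (Equiv.swap ⟨x, hx⟩ (e₀.symm ⟨y, hy⟩)).trans e₀
  have hadj {u : Set V} (hu : M.IsClique u) (a b : u) : M.Adj a b ↔ a ≠ b :=
    ⟨fun h hab => M.ne_of_adj h (congrArg Subtype.val hab),
      fun hab => hu a.2 b.2 (Subtype.coe_ne_coe.mpr hab)⟩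
  let f : M.induce s ≃g M.induce t :=
    ⟨e, fun {a b} => by simp only [comap_adj, Function.Embedding.subtype_apply,
      hadj hs, hadj ht, ne_eq, EmbeddingLike.apply_eq_iff_eq]⟩
  simpa [f, e] using hM.sameOrbit_of_iso hsf hsn f ⟨x, hx⟩

theorem adj_swap_apply_iff [DecidableEq V] {s : Set V} {a b : V}
    (h : ∀ w ∈ s, w ≠ a → w ≠ b → (M.Adj a w ↔ M.Adj b w)) {z w : V} (hz : z ∈ s)
    (hw : w ∈ s) : M.Adj (Equiv.swap a b z) (Equiv.swap a b w) ↔ M.Adj z w := by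
  have hloop (v : V) : ¬ M.Adj v v := M.irrefl
  simp only [Equiv.swap_apply_def]
  split_ifs <;> subst_vars <;> grind [adj_comm]

theorem IsNHom.sameOrbit_of_forall_adj_iff {s : Set V} (hM : IsNHom M s.ncard)
    (hs : s.Finite) {a b : V} (ha : a ∈ s) (hb : b ∈ s)
    (h : ∀ w ∈ s, w ≠ a → w ≠ b → (M.Adj a w ↔ M.Adj b w)) : SameOrbit M a b := by
  classical
  let σ : Equiv.Perm s := (Equiv.swap a b).subtypePerm fun z => by
    simp only [Equiv.swap_apply_def]
    split_ifs <;> subst_vars <;> simp_all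
  let f : M.induce s ≃g M.induce s :=
    ⟨σ, fun {z w} => adj_swap_apply_iff h z.2 w.2⟩
  have hab : SameOrbit M a (Equiv.swap a b a) := hM.sameOrbit_of_iso hs rfl f ⟨a, ha⟩
  rwa [Equiv.swap_apply_left] at hab

theorem IsNHom.sameOrbit_of_isClique_of_infinite {n : ℕ} (hM : IsNHom M n) (hn : 1 ≤ n)
    {s t : Set V} (hs : M.IsClique s) (ht : M.IsClique t) (hsi : s.Infinite) (hti : t.Infinite)
    {x y : V} (hx : x ∈ s) (hy : y ∈ t) : SameOrbit M x y := by
  obtain ⟨s', hs's, hxs', hs'f, hs'n⟩ := hsi.exists_finite_subset_mem_ncard_eq hx hn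
  obtain ⟨t', ht't, hyt', ht'f, ht'n⟩ := hti.exists_finite_subset_mem_ncard_eq hy hn
  exact hM.sameOrbit_of_isClique (hs.subset hs's) (ht.subset ht't) hs'f ht'f hs'n ht'n hxs' hyt'

theorem GeqHom.encard_lt_of_not_sameOrbit {k : ℕ} (hM : GeqHom M k) {a b : V}
    (hab : ¬ SameOrbit M a b) :
    {w | w ≠ a ∧ w ≠ b ∧ (M.Adj a w ↔ M.Adj b w)}.encard < k := by
  by_contra! hk
  obtain ⟨B, hBsub, hBk⟩ := Set.exists_subset_encard_eq hk
  have hBf : B.Finite := Set.finite_of_encard_eq_coe hBk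
  set s := insert a (insert b B)
  have hsf : s.Finite := (hBf.insert b).insert a
  have hks : k ≤ s.ncard := by
    calc k = B.ncard := by simp [Set.ncard_def, hBk]
      _ ≤ s.ncard := Set.ncard_le_ncard
          ((Set.subset_insert b B).trans (Set.subset_insert a _)) hsf
  refine hab ((hM _ hks).sameOrbit_of_forall_adj_iff hsf (Set.mem_insert a _)
    (Set.mem_insert_of_mem a (Set.mem_insert b B)) fun w hw hwa hwb => ?_)
  have hwB : w ∈ B := by simpa [s, hwa, hwb] using hw
  exact (hBsub hwB).2.2

theorem IsOrbit.mem_of_mem_isClique {k : ℕ} {p q s : Set V} (hp : IsOrbit M p)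
    (hM : IsNHom M k) (hk : 1 ≤ k) (hK : HasKInf M) (hqf : q.Finite)
    (hcover : p ∪ q = Set.univ) (hs : M.IsClique s) (hsi : s.Infinite) {x : V} (hx : x ∈ s) :
    x ∈ p := by
  obtain ⟨f⟩ := hK
  have hKi : (Set.range f).Infinite := Set.infinite_range_of_injective f.injective
  obtain ⟨c, hcK, hcq⟩ := (hKi.sdiff hqf).nonempty
  have hcp : c ∈ p := ((hcover ▸ Set.mem_univ c : c ∈ p ∪ q)).resolve_right hcq
  exact (hp.mem_iff_sameOrbit hcp).mpr
    (hM.sameOrbit_of_isClique_of_infinite hk (isClique_range_copy_top f.toCopy) hs hKi hsi hcK hx)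

theorem IsOrbit.not_adj_of_mem_of_mem {k : ℕ} {p q : Set V} (hp : IsOrbit M p)
    (hq : IsOrbit M q) (hM : IsNHom M k) (hk : 1 ≤ k) (hK : HasKInf M) (hqf : q.Finite)
    (hcover : p ∪ q = Set.univ) (hpq : Disjoint p q) {u v : V} (hu : u ∈ q) (hv : v ∈ p) :
    ¬ M.Adj u v := by
  intro huv
  have ⟨f⟩ := hK
  set K := Set.range f
  have hKc : M.IsClique K := isClique_range_copy_top f.toCopy
  have hKi : K.Infinite := Set.infinite_range_of_injective f.injective
  have hKp : K ⊆ p := fun x hx => hp.mem_of_mem_isClique hM hk hK hqf hcover hKc hKi hx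
  obtain ⟨u₀, hu₀, hinf⟩ : ∃ u₀ ∈ q, (K ∩ M.neighborSet u₀).Infinite := by
    by_contra! hfin
    refine hKi ((hqf.biUnion hfin).subset fun w hw => ?_)
    obtain ⟨u', hu', hadj⟩ := hp.exists_adj_of_adj hq hu hv huv (hKp hw)
    exact Set.mem_biUnion hu' ⟨hw, hadj⟩
  have hclique : M.IsClique (insert u₀ (K ∩ M.neighborSet u₀)) :=
    isClique_insert.mpr ⟨hKc.subset Set.inter_subset_left, fun w hw _ => hw.2⟩
  exact Set.disjoint_left.mp hpq (hp.mem_of_mem_isClique hM hk hK hqf hcover hclique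
    (hinf.mono (Set.subset_insert _ _)) (Set.mem_insert _ _)) hu₀

end SimpleGraph

theorem stmt2_general {V : Type} (M : SimpleGraph V) (k : ℕ)
    (hM : GeqHom M k) (h1 : ¬ IsNHom M 1) (hK : HasKInf M)
    (p q : Set V) (hp : IsOrbit M p) (hq : IsOrbit M q)
    (hpi : p.Infinite) (hqf : q.Finite) (hcover : p ∪ q = Set.univ) :
    ∀ a ∈ p, {b | b ≠ a ∧ ¬ M.Adj a b}.Finite ∧
      {b | b ≠ a ∧ ¬ M.Adj a b}.ncard ≤ k + q.ncard - 1 := by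
  intro a ha
  have hk : 1 ≤ k := by
    by_contra! hk
    exact h1 (hM 1 (by omega))
  have hpq : Disjoint p q := by
    by_contra hpq
    exact hpi (hp.eq_of_not_disjoint hq hpq ▸ hqf)
  obtain ⟨b, hb⟩ := hq.nonempty
  have hab : ¬ SameOrbit M a b := fun hab =>
    Set.disjoint_left.mp hpq ((hp.mem_iff_sameOrbit ha).mpr hab) hb
  have hnonadj : {w | w ≠ a ∧ ¬ M.Adj a w} ∩ p ⊆
      {w | w ≠ a ∧ w ≠ b ∧ (M.Adj a w ↔ M.Adj b w)} :=
    fun w ⟨⟨hwa, hnadj⟩, hwp⟩ =>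
      ⟨hwa, fun hwb => Set.disjoint_left.mp hpq hwp (hwb ▸ hb),
        iff_of_false hnadj
          (hp.not_adj_of_mem_of_mem hq (hM k le_rfl) hk hK hqf hcover hpq hb hwp)⟩
  exact Set.encard_le_coe_iff_finite_ncard_le.mp <| Set.encard_le_of_encard_inter_lt hcover hqf <|
    (Set.encard_le_encard hnonadj).trans_lt (hM.encard_lt_of_not_sameOrbit hab)

theorem stmt2 {V : Type} [Countable V] [Infinite V] (M : SimpleGraph V) (k : ℕ)
    (hM : GeqHom M k) (h1 : ¬ IsNHom M 1) (hK : HasKInf M)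
    (p q : Set V) (hp : IsOrbit M p) (hq : IsOrbit M q)
    (hpi : p.Infinite) (hqf : q.Finite) (hcover : p ∪ q = Set.univ) :
    ∀ a ∈ p, {b | b ≠ a ∧ ¬ M.Adj a b}.Finite ∧
      {b | b ≠ a ∧ ¬ M.Adj a b}.ncard ≤ k + q.ncard - 1 :=
  stmt2_general M k hM h1 hK p q hp hq hpi hqf hcover
end

section
/- Let M be a countably infinite graph that is ≥k-homogeneous but not 1-homogeneous with K_∞ ⊆ M, and let p be the infinite vertex orbit. If a, b, c ∈ p are such that a is not adjacent to b and a is not adjacent to c, then b is not adjacent to c. In other words, non-adjacency restricted to p is a transitive relation on distinct vertices. -/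
open SimpleGraph

/-!
By `k`-homogeneity, two vertices with the same adjacencies to a set of `k - 1` other vertices
lie in the same orbit. Comparing a vertex of `p` with one of `q` in this way shows first that a
vertex of `q` sees only finitely many vertices of an induced `K_∞`, and then that every vertex of
`p` has only finitely many non-neighbours.

Now suppose `a ≁ b`, `a ≁ c` and `b ∼ c`, and take a clique `e₀, …, e_m` of common neighbours of
`a, b, c`. For each `i`, homogeneity on cliques sends `(b, c, e₀, …, e_{m-1})` to
`(b, e_i, the other e_j)`, and the image of `a` is a non-neighbour of `b` adjacent to every `e_j`
except `e_i`. These `m + 1` non-neighbours of `b` are distinct, for every `m`.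
-/

open Function Set

section

variable {V : Type*} {M : SimpleGraph V} {k : ℕ} {p q : Set V}

lemma IsOrbit.mem_of_sameOrbit (hp : IsOrbit M p) {x y : V} (hx : x ∈ p)
    (hxy : SameOrbit M x y) : y ∈ p := by
  obtain ⟨a, rfl⟩ := hp
  obtain ⟨g, rfl⟩ := hx
  obtain ⟨h, rfl⟩ := hxy
  exact ⟨g.trans h, rfl⟩

lemma IsOrbit.sameOrbit (hp : IsOrbit M p) {x y : V} (hx : x ∈ p) (hy : y ∈ p) :
    SameOrbit M x y := by
  obtain ⟨a, rfl⟩ := hp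
  obtain ⟨g, rfl⟩ := hx
  obtain ⟨h, rfl⟩ := hy
  exact ⟨g.symm.trans h, by simp⟩

lemma IsOrbit.nonempty (hp : IsOrbit M p) : p.Nonempty := by
  obtain ⟨a, rfl⟩ := hp
  exact ⟨a, RelIso.refl _, rfl⟩

lemma IsOrbit.exists_isClique_infinite_mem (hp : IsOrbit M p) {A : Set V} (hA : M.IsClique A)
    (hAinf : A.Infinite) (hAp : (A ∩ p).Nonempty) {b : V} (hb : b ∈ p) :
    ∃ B : Set V, M.IsClique B ∧ B.Infinite ∧ b ∈ B := by
  obtain ⟨w, hwA, hwp⟩ := hAp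
  obtain ⟨g, rfl⟩ := hp.sameOrbit hwp hb
  refine ⟨g '' A, ?_, hAinf.image g.injective.injOn, w, hwA, rfl⟩
  rintro _ ⟨u, hu, rfl⟩ _ ⟨v, hv, rfl⟩ hne
  exact g.map_adj_iff.mpr (hA hu hv (ne_of_apply_ne g hne))

lemma GeqHom.exists_aut_extend (hM : GeqHom M k) {ι : Type*} [Finite ι] (hk : k ≤ Nat.card ι)
    {u v : ι → V} (hu : Injective u) (hv : Injective v)
    (hadj : ∀ i j, M.Adj (v i) (v j) ↔ M.Adj (u i) (u j)) :
    ∃ g : M ≃g M, ∀ i, g (u i) = v i := by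
  let e : range u ≃ range v := (Equiv.ofInjective u hu).symm.trans (Equiv.ofInjective v hv)
  have he : ∀ i, e ⟨u i, i, rfl⟩ = ⟨v i, i, rfl⟩ := fun i => by
    simp [e, Equiv.ofInjective_symm_apply]
  let φ : M.induce (range u) ≃g M.induce (range v) :=
    { e with
      map_rel_iff' := by
        rintro ⟨_, i, rfl⟩ ⟨_, j, rfl⟩
        simp [he, hadj] }
  obtain ⟨g, hg⟩ := hM _ hk _ _ (finite_range u) (finite_range v)
    (ncard_range_of_injective hu) (ncard_range_of_injective hv) φ
  exact ⟨g, fun i => (hg ⟨u i, i, rfl⟩).trans (congrArg Subtype.val (he i))⟩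

lemma SimpleGraph.IsClique.adj_iff_ne_of_injective {ι : Type*} {u : ι → V}
    (hc : M.IsClique (range u)) (hu : Injective u) {i j : ι} : M.Adj (u i) (u j) ↔ i ≠ j :=
  ⟨fun h hij => h.ne (congrArg u hij), fun hij => hc (mem_range_self i) (mem_range_self j)
    (hu.ne hij)⟩

lemma GeqHom.exists_aut_extend_of_isClique (hM : GeqHom M k) {ι : Type*} [Finite ι]
    (hk : k ≤ Nat.card ι) {u v : ι → V} (hu : Injective u) (hv : Injective v)
    (hcu : M.IsClique (range u)) (hcv : M.IsClique (range v)) :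
    ∃ g : M ≃g M, ∀ i, g (u i) = v i :=
  hM.exists_aut_extend hk hu hv fun _ _ => by
    rw [hcu.adj_iff_ne_of_injective hu, hcv.adj_iff_ne_of_injective hv]

lemma GeqHom.sameOrbit_of_adj_iff (hM : GeqHom M k) {F : Set V} (hF : F.Finite)
    (hk : k ≤ F.ncard + 1) {x y : V} (hx : x ∉ F) (hy : y ∉ F)
    (hxy : ∀ z ∈ F, M.Adj x z ↔ M.Adj y z) : SameOrbit M x y := by
  have : Finite F := hF
  have hu : Injective fun o : Option F => o.elim x Subtype.val := by
    rintro (_ | ⟨z, hz⟩) (_ | ⟨z', hz'⟩) h <;> grind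
  have hv : Injective fun o : Option F => o.elim y Subtype.val := by
    rintro (_ | ⟨z, hz⟩) (_ | ⟨z', hz'⟩) h <;> grind
  obtain ⟨g, hg⟩ := hM.exists_aut_extend (by rwa [Finite.card_option, Nat.card_coe_set_eq]) hu hv
    (by rintro (_ | ⟨z, hz⟩) (_ | ⟨z', hz'⟩) <;> simp [adj_comm, *])
  exact ⟨g, hg none⟩

lemma GeqHom.finite_neighborSet_inter (hM : GeqHom M k) (hp : IsOrbit M p) {A : Set V}
    (hA : M.IsClique A) (hAp : (A ∩ p).Infinite) {y : V} (hy : y ∉ p) :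
    (M.neighborSet y ∩ A).Finite := by
  by_contra hinf
  obtain ⟨F, hFsub, hF, hFk⟩ := Set.Infinite.exists_subset_ncard_eq hinf k
  obtain ⟨x, ⟨hxA, hxp⟩, hxF⟩ := (hAp.sdiff hF).nonempty
  refine hy (hp.mem_of_sameOrbit hxp (hM.sameOrbit_of_adj_iff hF (by omega) hxF
    (fun h => M.irrefl (hFsub h).1) fun z hz => ?_))
  exact iff_of_true (hA hxA (hFsub hz).2 (ne_of_mem_of_not_mem hz hxF).symm) (hFsub hz).1

lemma GeqHom.finite_compl_commonNeighbors (hM : GeqHom M k) (hp : IsOrbit M p) {x y : V}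
    (hx : x ∈ p) (hy : y ∉ p) : (Mᶜ.commonNeighbors x y).Finite := by
  by_contra hinf
  obtain ⟨F, hFsub, hF, hFk⟩ := Set.Infinite.exists_subset_ncard_eq hinf (k - 1)
  refine hy (hp.mem_of_sameOrbit hx (hM.sameOrbit_of_adj_iff hF (by omega)
    (fun h => notMem_commonNeighbors_left _ _ _ (hFsub h))
    (fun h => notMem_commonNeighbors_right _ _ _ (hFsub h)) fun z hz => ?_))
  obtain ⟨hxz, hyz⟩ := Mᶜ.mem_commonNeighbors.mp (hFsub hz)
  exact iff_of_false ((M.compl_adj _ _).mp hxz).2 ((M.compl_adj _ _).mp hyz).2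

lemma GeqHom.finite_compl_neighborSet (hM : GeqHom M k) (hp : IsOrbit M p) (hq : IsOrbit M q)
    (hqf : q.Finite) (hcover : p ∪ q = univ) (hpq : ∀ y ∈ q, y ∉ p) {A : Set V}
    (hA : M.IsClique A) (hAp : (A ∩ p).Infinite) {x : V} (hx : x ∈ p) :
    (Mᶜ.neighborSet x).Finite := by
  suffices hN : (Mᶜ.neighborSet x ∩ p).Finite from (hN.union hqf).subset fun v hv =>
    (hcover.symm ▸ mem_univ v : v ∈ p ∪ q).imp (⟨hv, ·⟩) id
  by_contra hinf
  have hU : (⋃ y ∈ q, Mᶜ.commonNeighbors x y).Finite :=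
    hqf.biUnion fun y hy => hM.finite_compl_commonNeighbors hp hx (hpq y hy)
  obtain ⟨r, ⟨hxr, hrp⟩, hrU⟩ := (Set.Infinite.sdiff hinf hU).nonempty
  -- `r` is adjacent to all of `q`, hence by transitivity on `p` so is every vertex of `p`.
  have hr : ∀ y ∈ q, M.Adj r y := fun y hy => by
    by_contra h
    have hyr : y ≠ r := fun hyr => hpq y hy (hyr ▸ hrp)
    exact hrU (mem_biUnion hy
      (Mᶜ.mem_commonNeighbors.mpr ⟨hxr, (M.compl_adj _ _).mpr ⟨hyr, fun h' => h h'.symm⟩⟩))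
  obtain ⟨y, hy⟩ := hq.nonempty
  have hsub : A ∩ p ⊆ M.neighborSet y ∩ A := by
    rintro v ⟨hvA, hvp⟩
    refine ⟨?_, hvA⟩
    obtain ⟨g, rfl⟩ := hp.sameOrbit hrp hvp
    have := g.map_adj_iff.mpr (hr _ (hq.mem_of_sameOrbit hy ⟨g.symm, rfl⟩))
    rw [g.apply_symm_apply] at this
    exact this.symm
  exact (hM.finite_neighborSet_inter hp hA hAp (hpq y hy)).not_infinite (hAp.mono hsub)

lemma GeqHom.exists_separating_nonneighbor (hM : GeqHom M k) {m : ℕ} (hk : k ≤ m + 2)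
    {a b c : V} (hab : a ≠ b) (hnab : ¬ M.Adj a b) (hnac : ¬ M.Adj a c) (hbc : M.Adj b c)
    {e : Fin (m + 1) → V} (he : Injective e) (hec : M.IsClique (range e))
    (hae : ∀ i, M.Adj a (e i)) (hbe : ∀ i, M.Adj b (e i)) (hce : ∀ i, M.Adj c (e i))
    (i : Fin (m + 1)) :
    ∃ x, Mᶜ.Adj b x ∧ ¬ M.Adj x (e i) ∧ ∀ j ≠ i, M.Adj x (e j) := by
  set u : Fin (m + 2) → V := Fin.cons b (Fin.cons c (e ∘ Fin.castSucc))
  set v : Fin (m + 2) → V := Fin.cons b (Fin.cons (e i) (e ∘ i.succAbove))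
  have hu : Injective u := by
    simp only [u, Fin.cons_injective_iff, Fin.range_cons, mem_insert_iff, mem_range, comp_apply,
      not_or, not_exists]
    exact ⟨⟨hbc.ne, fun j h => (hbe _).ne h.symm⟩, fun j h => (hce _).ne h.symm,
      he.comp (Fin.castSucc_injective _)⟩
  have hv : Injective v := by
    simp only [v, Fin.cons_injective_iff, Fin.range_cons, mem_insert_iff, mem_range, comp_apply,
      not_or, not_exists]
    exact ⟨⟨(hbe i).ne, fun j h => (hbe _).ne h.symm⟩, fun j h => Fin.succAbove_ne i j (he h),
      he.comp Fin.succAbove_right_injective⟩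
  have hcu : M.IsClique (range u) := by
    simp only [u, Fin.range_cons, isClique_insert, mem_insert_iff, mem_range, comp_apply]
    refine ⟨⟨hec.subset (range_comp_subset_range _ _), ?_⟩, ?_⟩
    · rintro _ ⟨j, rfl⟩ -
      exact hce _
    · rintro _ (rfl | ⟨j, rfl⟩) -
      exacts [hbc, hbe _]
  have hcv : M.IsClique (range v) := by
    simp only [v, Fin.range_cons, isClique_insert, mem_insert_iff, mem_range, comp_apply]
    refine ⟨⟨hec.subset (range_comp_subset_range _ _), ?_⟩, ?_⟩
    · rintro _ ⟨j, rfl⟩ hne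
      exact hec (mem_range_self _) (mem_range_self _) hne
    · rintro _ (rfl | ⟨j, rfl⟩) -
      exacts [hbe _, hbe _]
  obtain ⟨g, hg⟩ := hM.exists_aut_extend_of_isClique (by simpa using hk) hu hv hcu hcv
  have hgb : g b = b := hg 0
  have hgc : g c = e i := hg 1
  have hge : ∀ j, g (e j.castSucc) = e (i.succAbove j) := fun j => hg j.succ.succ
  refine ⟨g a, (M.compl_adj _ _).mpr ⟨?_, ?_⟩, ?_, fun j hj => ?_⟩
  · rw [← hgb]; exact g.injective.ne hab.symm
  · rw [← hgb, g.map_adj_iff]; exact fun h => hnab h.symm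
  · rw [← hgc, g.map_adj_iff]; exact hnac
  · obtain ⟨j', rfl⟩ := Fin.exists_succAbove_eq hj
    rw [← hge, g.map_adj_iff]; exact hae _

lemma GeqHom.infinite_compl_neighborSet (hM : GeqHom M k) {a b c : V} (hab : a ≠ b)
    (hnab : ¬ M.Adj a b) (hnac : ¬ M.Adj a c) (hbc : M.Adj b c) {e : ℕ → V} (he : Injective e)
    (hec : M.IsClique (range e)) (hae : ∀ n, M.Adj a (e n)) (hbe : ∀ n, M.Adj b (e n))
    (hce : ∀ n, M.Adj c (e n)) : (Mᶜ.neighborSet b).Infinite := by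
  intro hfin
  have : Finite (Mᶜ.neighborSet b) := hfin
  choose ξ hξ using hM.exists_separating_nonneighbor (m := (Mᶜ.neighborSet b).ncard + k)
    (by omega) hab hnab hnac hbc (he.comp Fin.val_injective)
    (hec.subset (range_comp_subset_range _ _))
    (fun i => hae i) (fun i => hbe i) (fun i => hce i)
  have hξ_inj : Injective fun i => (⟨ξ i, (hξ i).1⟩ : Mᶜ.neighborSet b) := by
    intro i j hij
    by_contra hne
    have hξij : ξ i = ξ j := congrArg Subtype.val hij
    exact (hξ i).2.1 (hξij ▸ (hξ j).2.2 i hne)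
  have := Nat.card_le_card_of_injective _ hξ_inj
  rw [Nat.card_coe_set_eq, Nat.card_eq_fintype_card, Fintype.card_fin] at this
  omega

lemma SimpleGraph.IsClique.exists_injective_seq_adj {B : Set V} (hB : M.IsClique B)
    (hBinf : B.Infinite) {a b c : V} (hbB : b ∈ B) (ha : (Mᶜ.neighborSet a).Finite)
    (hc : (Mᶜ.neighborSet c).Finite) :
    ∃ e : ℕ → V, Injective e ∧ M.IsClique (range e) ∧
      ∀ n, M.Adj a (e n) ∧ M.Adj b (e n) ∧ M.Adj c (e n) := by
  set X := Mᶜ.neighborSet a ∪ Mᶜ.neighborSet c ∪ {a, b, c}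
  have hX : X.Finite := (ha.union hc).union (toFinite _)
  let s := (hBinf.sdiff hX).natEmbedding
  refine ⟨fun n => s n, Subtype.val_injective.comp s.injective,
    hB.subset (range_subset_iff.mpr fun n => (s n).2.1), fun n => ?_⟩
  obtain ⟨hsB, hsX⟩ := (s n).2
  simp only [X, mem_union, mem_insert_iff, mem_singleton_iff, mem_neighborSet, compl_adj,
    not_or] at hsX
  exact ⟨not_not.mp fun h => hsX.1.1 ⟨Ne.symm hsX.2.1, h⟩, hB hbB hsB (Ne.symm hsX.2.2.1),
    not_not.mp fun h => hsX.1.2 ⟨Ne.symm hsX.2.2.2, h⟩⟩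

end

theorem stmt3_general {V : Type} (M : SimpleGraph V) (k : ℕ)
    (hM : GeqHom M k) (hK : HasKInf M)
    (p q : Set V) (hp : IsOrbit M p) (hq : IsOrbit M q)
    (hpi : p.Infinite) (hqf : q.Finite) (hcover : p ∪ q = Set.univ) :
    ∀ a ∈ p, ∀ b ∈ p, ∀ c ∈ p, a ≠ b → a ≠ c →
      ¬ M.Adj a b → ¬ M.Adj a c → ¬ M.Adj b c := by
  intro a ha b hb c hc hab _ hnab hnac hbc
  obtain ⟨f⟩ := hK
  have hpq : ∀ y ∈ q, y ∉ p := fun y hy hyp =>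
    hpi (hqf.subset fun w hw => hq.mem_of_sameOrbit hy (hp.sameOrbit hyp hw))
  have hA : M.IsClique (range f) := by
    rintro _ ⟨i, rfl⟩ _ ⟨j, rfl⟩ hne
    exact f.map_adj_iff.mpr (ne_of_apply_ne f hne)
  have hAinf : (range f).Infinite := infinite_range_of_injective f.injective
  have hAp : (range f ∩ p).Infinite := (hAinf.sdiff hqf).mono fun v hv =>
    ⟨hv.1, (hcover.symm ▸ mem_univ v : v ∈ p ∪ q).resolve_right hv.2⟩
  have hfin : ∀ x ∈ p, (Mᶜ.neighborSet x).Finite := fun x hx =>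
    hM.finite_compl_neighborSet hp hq hqf hcover hpq hA hAp hx
  obtain ⟨B, hB, hBinf, hbB⟩ := hp.exists_isClique_infinite_mem hA hAinf hAp.nonempty hb
  obtain ⟨e, he, hec, hadj⟩ := hB.exists_injective_seq_adj hBinf hbB (hfin a ha) (hfin c hc)
  exact hM.infinite_compl_neighborSet hab hnab hnac hbc he hec (fun n => (hadj n).1)
    (fun n => (hadj n).2.1) (fun n => (hadj n).2.2) (hfin b hb)

theorem stmt3 {V : Type} [Countable V] [Infinite V] (M : SimpleGraph V) (k : ℕ)
    (hM : GeqHom M k) (h1 : ¬ IsNHom M 1) (hK : HasKInf M)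
    (p q : Set V) (hp : IsOrbit M p) (hq : IsOrbit M q)
    (hpi : p.Infinite) (hqf : q.Finite) (hcover : p ∪ q = Set.univ) :
    ∀ a ∈ p, ∀ b ∈ p, ∀ c ∈ p, a ≠ b → a ≠ c →
      ¬ M.Adj a b → ¬ M.Adj a c → ¬ M.Adj b c :=
  stmt3_general M k hM hK p q hp hq hpi hqf hcover
end

section
/- Let M be a countably infinite graph that is ≥k-homogeneous and 1-homogeneous but not 2-homogeneous, with K_∞ ⊆ M. Then M has at most two orbits (under Aut(M) acting on pairs) of ordered pairs of adjacent vertices, and at most two orbits of ordered pairs of distinct non-adjacent vertices. -/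
open SimpleGraph

/-!
Each of the relations `q₁, q₂, p₁, p₂` is a single orbit of pairs. Given a pair `(a, b)` in one
of them, take an induced `K_∞` through `a` (it exists by vertex-transitivity) and `k - 1` further
vertices of it that are all adjacent to `b` (for `q₁`, `p₂`) or all non-adjacent to `b` (for `q₂`,
`p₁`, where `b` has only finitely many neighbours on the `K_∞`). The graph induced on `b`, `a` and
these vertices is then determined by the relation alone, so `≥k`-homogeneity maps any two pairs
of the same relation onto each other. For `q₂` the finiteness holds because infinitely many
neighbours of `b` on a `K_∞` through `a` would, together with `b`, span a `K_∞` through `a` and `b`.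
-/

open Function Set

section

variable {V : Type*} {M : SimpleGraph V}

theorem SimpleGraph.adj_iff_ne_of_isClique_range {ι : Type*} {x : ι → V}
    (hx : M.IsClique (range x)) (hinj : Injective x) (i j : ι) : M.Adj (x i) (x j) ↔ i ≠ j :=
  ⟨fun h e => h.ne (congrArg x e), fun h => hx (mem_range_self i) (mem_range_self j) (hinj.ne h)⟩

theorem SimpleGraph.adj_cons_iff_adj_cons {n : ℕ} {x y : Fin n → V} {b d : V}
    (hxy : ∀ i j, M.Adj (x i) (x j) ↔ M.Adj (y i) (y j))
    (hbd : ∀ i, M.Adj b (x i) ↔ M.Adj d (y i)) (p q : Fin (n + 1)) :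
    M.Adj ((Fin.cons b x : Fin (n + 1) → V) p) ((Fin.cons b x : Fin (n + 1) → V) q) ↔
      M.Adj ((Fin.cons d y : Fin (n + 1) → V) p) ((Fin.cons d y : Fin (n + 1) → V) q) := by
  cases p using Fin.cases <;> cases q using Fin.cases <;>
    simp only [Fin.cons_zero, Fin.cons_succ, SimpleGraph.irrefl, hxy, hbd]
  rw [M.adj_comm, hbd, M.adj_comm]

theorem IsNHom.exists_extend {n : ℕ} (h : IsNHom M n) {x y : Fin n → V} (hx : Injective x)
    (hy : Injective y) (hxy : ∀ i j, M.Adj (x i) (x j) ↔ M.Adj (y i) (y j)) :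
    ∃ g : M ≃g M, ∀ i, g (x i) = y i := by
  let e : range x ≃ range y := (Equiv.ofInjective x hx).symm.trans (Equiv.ofInjective y hy)
  have he : ∀ i, e ⟨x i, mem_range_self i⟩ = ⟨y i, mem_range_self i⟩ := fun i => by
    simp [e, Equiv.ofInjective_symm_apply]
  have hadj : ∀ {u v : range x},
      (M.induce (range y)).Adj (e u) (e v) ↔ (M.induce (range x)).Adj u v := by
    rintro ⟨_, i, rfl⟩ ⟨_, j, rfl⟩
    simpa only [he, comap_adj, Function.Embedding.coe_subtype] using (hxy i j).symm
  obtain ⟨g, hg⟩ := h _ _ (finite_range x) (finite_range y)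
    (by simp [ncard_range_of_injective hx]) (by simp [ncard_range_of_injective hy]) ⟨e, hadj⟩
  exact ⟨g, fun i => (hg ⟨x i, mem_range_self i⟩).trans (congrArg Subtype.val (he i))⟩

theorem IsNHom.exists_apply_eq (h : IsNHom M 1) (a b : V) : ∃ g : M ≃g M, g a = b := by
  obtain ⟨g, hg⟩ := h.exists_extend (x := fun _ : Fin 1 => a) (y := fun _ => b)
    (injective_of_subsingleton _) (injective_of_subsingleton _) (by simp)
  exact ⟨g, hg 0⟩

theorem exists_top_embedding_mem_range (h1 : IsNHom M 1) (hK : HasKInf M) (a : V) :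
    ∃ f : (⊤ : SimpleGraph ℕ) ↪g M, a ∈ range f := by
  obtain ⟨f⟩ := hK
  obtain ⟨g, hg⟩ := h1.exists_apply_eq (f 0) a
  exact ⟨f.trans g.toEmbedding, 0, hg⟩

theorem SimpleGraph.IsClique.exists_top_embedding_range_eq {S : Set V} (hS : M.IsClique S)
    (hinf : S.Infinite) (hc : S.Countable) :
    ∃ f : (⊤ : SimpleGraph ℕ) ↪g M, range f = S := by
  have := hinf.to_subtype
  have := hc.to_subtype
  obtain ⟨e⟩ := nonempty_equiv_of_countable (α := ℕ) (β := S)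
  have hrange : range (fun i => (e i : V)) = S := by
    ext v
    exact ⟨by rintro ⟨i, rfl⟩; exact (e i).2, fun hv => ⟨e.symm ⟨v, hv⟩, by simp⟩⟩
  refine ⟨⟨⟨fun i => e i, Subtype.val_injective.comp e.injective⟩, fun {i j} => ?_⟩, hrange⟩
  rw [← hrange] at hS
  exact (M.adj_iff_ne_of_isClique_range hS
    (Subtype.val_injective.comp e.injective) i j).trans (top_adj i j).symm

theorem inCommonKInf_of_isClique {S : Set V} (hS : M.IsClique S) (hinf : S.Infinite)
    {a b : V} (ha : a ∈ S) (hb : b ∈ S) : InCommonKInf M a b := by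
  let e := hinf.natEmbedding
  set T := insert a (insert b (range fun i => (e i : V)))
  have hTS : T ⊆ S := insert_subset ha (insert_subset hb (range_subset_iff.2 fun i => (e i).2))
  have hTinf : T.Infinite := (infinite_range_of_injective
    (Subtype.val_injective.comp e.injective)).mono ((subset_insert _ _).trans (subset_insert _ _))
  obtain ⟨f, hf⟩ := (hS.subset hTS).exists_top_embedding_range_eq hTinf
    (((countable_range _).insert b).insert a)
  exact ⟨f, hf ▸ mem_insert a _, hf ▸ mem_insert_of_mem a (mem_insert b _)⟩

def HasCliqueWitness (M : SimpleGraph V) (P : Prop) (m : ℕ) (a b : V) : Prop :=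
  ∃ x : Fin (m + 1) → V, Injective x ∧ M.IsClique (range x) ∧ x 0 = a ∧ b ∉ range x ∧
    ∀ i : Fin m, (M.Adj b (x i.succ) ↔ P)

theorem HasCliqueWitness.samePairOrbit {P : Prop} {m : ℕ} {a b c d : V}
    (hM : IsNHom M (m + 2)) (hab : HasCliqueWitness M P m a b)
    (hcd : HasCliqueWitness M P m c d) (hadj : M.Adj a b ↔ M.Adj c d) :
    SamePairOrbit M a b c d := by
  obtain ⟨x, hx, hxS, rfl, hbx, hbP⟩ := hab
  obtain ⟨y, hy, hyS, rfl, hdy, hdP⟩ := hcd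
  have hxy : ∀ i j, M.Adj (x i) (x j) ↔ M.Adj (y i) (y j) := fun i j => by
    rw [M.adj_iff_ne_of_isClique_range hxS hx, M.adj_iff_ne_of_isClique_range hyS hy]
  have hbd : ∀ i, M.Adj b (x i) ↔ M.Adj d (y i) :=
    Fin.cases (by rw [M.adj_comm, hadj, M.adj_comm]) fun i => (hbP i).trans (hdP i).symm
  obtain ⟨g, hg⟩ := hM.exists_extend (Fin.cons_injective_iff.2 ⟨hbx, hx⟩)
    (Fin.cons_injective_iff.2 ⟨hdy, hy⟩) (M.adj_cons_iff_adj_cons hxy hbd)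
  exact ⟨g, hg (Fin.succ 0), hg 0⟩

theorem hasCliqueWitness_of_subset {P : Prop} {m : ℕ} {S T : Set V} {a b : V}
    (hS : M.IsClique S) (ha : a ∈ S) (hab : a ≠ b) (hTS : T ⊆ S \ {a, b})
    (hT : (m : ℕ∞) ≤ T.encard) (hbT : ∀ x ∈ T, (M.Adj b x ↔ P)) :
    HasCliqueWitness M P m a b := by
  obtain ⟨w, -⟩ := Fin.Embedding.exists_embedding_disjoint_range_of_add_le_ENat_card
    (α := T) (s := ∅) (n := m) (by simpa using hT)
  have hwT : ∀ i, (w i : V) ∈ S \ {a, b} := fun i => hTS (w i).2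
  refine ⟨Fin.cons a fun i => w i, Fin.cons_injective_iff.2
    ⟨?_, Subtype.val_injective.comp w.injective⟩, hS.subset ?_, rfl, ?_,
    fun i => hbT _ (w i).2⟩
  · rintro ⟨i, hi⟩
    exact (hwT i).2 (.inl hi)
  · rw [Fin.range_cons]
    exact insert_subset ha (range_subset_iff.2 fun i => (hwT i).1)
  · rw [Fin.range_cons]
    rintro (h | ⟨i, hi⟩)
    · exact hab h.symm
    · exact (hwT i).2 (.inr hi)

theorem hasCliqueWitness_false_of_finite {S : Set V} {a b : V} (hS : M.IsClique S)
    (hinf : S.Infinite) (ha : a ∈ S) (hab : a ≠ b) (hfin : (S ∩ M.neighborSet b).Finite)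
    (m : ℕ) : HasCliqueWitness M False m a b :=
  hasCliqueWitness_of_subset (T := (S \ (S ∩ M.neighborSet b)) \ {a, b}) hS ha hab
    (fun _ hx => ⟨hx.1.1, hx.2⟩)
    (by rw [((hinf.sdiff hfin).sdiff (toFinite {a, b})).encard_eq]; exact le_top)
    (fun _ hx => iff_false_intro fun h => hx.1.2 ⟨hx.1.1, h⟩)

theorem hasCliqueWitness_true_of_le_encard {S : Set V} {a b : V} {m : ℕ} (hS : M.IsClique S)
    (ha : a ∈ S) (hab : a ≠ b) (hm : (m : ℕ∞) ≤ ((S ∩ M.neighborSet b) \ {a}).encard) :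
    HasCliqueWitness M True m a b := by
  refine hasCliqueWitness_of_subset hS ha hab (fun x hx => ⟨hx.1.1, ?_⟩) hm
    (fun _ hx => iff_true_intro hx.1.2)
  rintro (rfl | rfl)
  · exact hx.2 rfl
  · exact M.irrefl hx.1.2

theorem isClique_range_top_embedding (f : (⊤ : SimpleGraph ℕ) ↪g M) : M.IsClique (range f) :=
  isClique_range_copy_top f.toCopy

theorem Q1Rel.hasCliqueWitness {a b : V} (h : Q1Rel M a b) (m : ℕ) :
    HasCliqueWitness M True m a b := by
  obtain ⟨hadj, f, ha, hb⟩ := h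
  refine hasCliqueWitness_true_of_le_encard (isClique_range_top_embedding f) ha hadj.ne ?_
  have hinf : (range f \ {a, b}).Infinite :=
    (infinite_range_of_injective f.injective).sdiff (toFinite _)
  have hsub : range f \ {a, b} ⊆ (range f ∩ M.neighborSet b) \ {a} := fun x hx =>
    ⟨⟨hx.1, isClique_range_top_embedding f hb hx.1 fun h => hx.2 (.inr h.symm)⟩,
      fun h => hx.2 (.inl h)⟩
  rw [(hinf.mono hsub).encard_eq]
  exact le_top

theorem Q2Rel.hasCliqueWitness (h1 : IsNHom M 1) (hK : HasKInf M) {a b : V} (h : Q2Rel M a b)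
    (m : ℕ) : HasCliqueWitness M False m a b := by
  obtain ⟨hadj, hno⟩ := h
  obtain ⟨f, ha⟩ := exists_top_embedding_mem_range h1 hK a
  have hS := isClique_range_top_embedding f
  refine hasCliqueWitness_false_of_finite hS (infinite_range_of_injective f.injective) ha
    hadj.ne (not_infinite.1 fun hinf => hno ?_) m
  exact inCommonKInf_of_isClique (S := insert b (range f ∩ M.neighborSet b))
    (isClique_insert.2 ⟨hS.subset inter_subset_left, fun _ hx _ => hx.2⟩)
    (hinf.mono (subset_insert _ _)) (mem_insert_of_mem _ ⟨ha, hadj.symm⟩) (mem_insert _ _)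

theorem P1Rel.hasCliqueWitness (h1 : IsNHom M 1) (hK : HasKInf M) {k : ℕ} {a b : V}
    (h : P1Rel M k a b) (m : ℕ) : HasCliqueWitness M False m a b := by
  obtain ⟨hne, -, hfin⟩ := h
  obtain ⟨f, ha⟩ := exists_top_embedding_mem_range h1 hK a
  exact hasCliqueWitness_false_of_finite (isClique_range_top_embedding f)
    (infinite_range_of_injective f.injective) ha hne (hfin f ha).1 m

theorem P2Rel.hasCliqueWitness {k : ℕ} {a b : V} (h : P2Rel M k a b) :
    HasCliqueWitness M True (k - 1) a b := by
  obtain ⟨hne, hnadj, hnP1⟩ := h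
  obtain ⟨f, ha, hbig⟩ : ∃ f : (⊤ : SimpleGraph ℕ) ↪g M, a ∈ range f ∧
      ¬((range f ∩ M.neighborSet b).Finite ∧ (range f ∩ M.neighborSet b).ncard ≤ k - 1) := by
    by_contra hcon
    exact hnP1 ⟨hne, hnadj, fun f ha => not_not.1 fun h => hcon ⟨f, ha, h⟩⟩
  refine hasCliqueWitness_true_of_le_encard (isClique_range_top_embedding f) ha hne ?_
  rw [sdiff_singleton_eq_self fun h => hnadj h.2.symm]
  by_contra hlt
  have hfin := finite_of_encard_le_coe (not_le.1 hlt).le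
  refine hbig ⟨hfin, ?_⟩
  have := hfin.cast_ncard_eq ▸ not_le.1 hlt
  exact_mod_cast this.le

def PairsSameOrbit (M : SimpleGraph V) (R : V → V → Prop) : Prop :=
  ∀ ⦃a b c d⦄, R a b → R c d → SamePairOrbit M a b c d

theorem pairsSameOrbit_of_hasCliqueWitness {k : ℕ} (hM : GeqHom M k) {R : V → V → Prop}
    {P Q : Prop} (hadj : ∀ ⦃a b⦄, R a b → (M.Adj a b ↔ Q))
    (hw : ∀ ⦃a b⦄, R a b → HasCliqueWitness M P (k - 1) a b) : PairsSameOrbit M R :=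
  fun _ _ _ _ hab hcd =>
    (hw hab).samePairOrbit (hM _ (by omega)) (hw hcd) ((hadj hab).trans (hadj hcd).symm)

theorem PairsSameOrbit.exists_forall_samePairOrbit [Nonempty V] {R : V → V → Prop}
    (hR : PairsSameOrbit M R) : ∃ a b, ∀ c d, R c d → SamePairOrbit M c d a b := by
  by_cases h : ∃ a b, R a b
  · obtain ⟨a, b, hab⟩ := h
    exact ⟨a, b, fun c d hcd => hR hcd hab⟩
  · obtain ⟨v⟩ := ‹Nonempty V›
    exact ⟨v, v, fun c d hcd => (h ⟨c, d, hcd⟩).elim⟩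

theorem exists_two_pairOrbits [Nonempty V] {R₁ R₂ : V → V → Prop} (h₁ : PairsSameOrbit M R₁)
    (h₂ : PairsSameOrbit M R₂) : ∃ a₁ b₁ a₂ b₂, ∀ c d, R₁ c d ∨ R₂ c d →
      SamePairOrbit M c d a₁ b₁ ∨ SamePairOrbit M c d a₂ b₂ := by
  obtain ⟨a₁, b₁, hab₁⟩ := h₁.exists_forall_samePairOrbit
  obtain ⟨a₂, b₂, hab₂⟩ := h₂.exists_forall_samePairOrbit
  exact ⟨a₁, b₁, a₂, b₂, fun c d => Or.imp (hab₁ c d) (hab₂ c d)⟩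

end

theorem stmt7_general {V : Type} (M : SimpleGraph V) (k : ℕ)
    (hM : GeqHom M k) (h1 : IsNHom M 1) (hK : HasKInf M) :
    (∃ a₁ b₁ a₂ b₂ : V, ∀ c d : V, M.Adj c d →
      SamePairOrbit M c d a₁ b₁ ∨ SamePairOrbit M c d a₂ b₂) ∧
    (∃ a₁ b₁ a₂ b₂ : V, ∀ c d : V, c ≠ d → ¬ M.Adj c d →
      SamePairOrbit M c d a₁ b₁ ∨ SamePairOrbit M c d a₂ b₂) := by
  have : Nonempty V := hK.map (· 0)
  have hq₁ : PairsSameOrbit M (Q1Rel M) :=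
    pairsSameOrbit_of_hasCliqueWitness hM (fun _ _ h => iff_of_true h.1 trivial)
    fun _ _ h => Q1Rel.hasCliqueWitness h _
  have hq₂ : PairsSameOrbit M (Q2Rel M) :=
    pairsSameOrbit_of_hasCliqueWitness hM (fun _ _ h => iff_of_true h.1 trivial)
    fun _ _ h => Q2Rel.hasCliqueWitness h1 hK h _
  have hp₁ : PairsSameOrbit M (P1Rel M k) :=
    pairsSameOrbit_of_hasCliqueWitness hM (fun _ _ h => iff_of_false h.2.1 not_false)
    fun _ _ h => P1Rel.hasCliqueWitness h1 hK h _
  have hp₂ : PairsSameOrbit M (P2Rel M k) :=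
    pairsSameOrbit_of_hasCliqueWitness hM (fun _ _ h => iff_of_false h.2.1 not_false)
    fun _ _ h => P2Rel.hasCliqueWitness h
  obtain ⟨a₁, b₁, a₂, b₂, hq⟩ := exists_two_pairOrbits hq₁ hq₂
  obtain ⟨c₁, d₁, c₂, d₂, hp⟩ := exists_two_pairOrbits hp₁ hp₂
  exact ⟨⟨a₁, b₁, a₂, b₂, fun c d hcd =>
      hq c d ((em (InCommonKInf M c d)).imp (⟨hcd, ·⟩) (⟨hcd, ·⟩))⟩,
    ⟨c₁, d₁, c₂, d₂, fun c d hne hcd =>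
      hp c d ((em (P1Rel M k c d)).imp id (⟨hne, hcd, ·⟩))⟩⟩

theorem stmt7 {V : Type} [Countable V] [Infinite V] (M : SimpleGraph V) (k : ℕ)
    (hM : GeqHom M k) (h1 : IsNHom M 1) (h2 : ¬ IsNHom M 2) (hK : HasKInf M) :
    (∃ a₁ b₁ a₂ b₂ : V, ∀ c d : V, M.Adj c d →
      SamePairOrbit M c d a₁ b₁ ∨ SamePairOrbit M c d a₂ b₂) ∧
    (∃ a₁ b₁ a₂ b₂ : V, ∀ c d : V, c ≠ d → ¬ M.Adj c d →
      SamePairOrbit M c d a₁ b₁ ∨ SamePairOrbit M c d a₂ b₂) :=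
  stmt7_general M k hM h1 hK
end

section
/- Let M be a countably infinite graph that is ≥k-homogeneous, 1-homogeneous but not 2-homogeneous, with K_∞ ⊆ M. With 2-orbits q_1 (edges in a common K_∞), p_1 (non-adjacent pairs (a,b) where b is adjacent to at most k−1 vertices of K_∞(a)), and p_2 (the remaining non-adjacent pairs): for each vertex a there are only finitely many vertices b with (a,b) ∈ p_2. -/
open SimpleGraph

/-!
Suppose some vertex has infinitely many `p₂`-partners. A `p₂`-pair is a non-adjacent pair with a
common `k`-clique of neighbours, so by vertex-transitivity every vertex has infinitely many such
partners. Call `x` and `y` near-twins if their neighbourhoods differ in finitely many vertices and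
anti-twins if they agree in finitely many. By `≥k`-homogeneity, `y` can be moved to `b` while `x`
stays fixed as soon as `x` sees `y` and `b` alike and `y`, `b` are not anti-twins: swap `y` and `b`
on `{x, y}` together with `k - 2` vertices on which `y` and `b` agree.

The heart of the proof is that a vertex has only finitely many anti-twins. Infinitely many
anti-twins of one vertex would be pairwise near-twins, so they would contain a near-twin `k`-clique
or independent `k`-set; either way every vertex would lie in an independent `k`-set of near-twins,
and together with a copy of `K_∞` this rules out anti-twins altogether.

Then two ordered pairs of the same adjacency type are conjugate: move them to a common first
vertex `u`, and swap both second vertices onto a vertex `b` with the right adjacency to `u` that is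
an anti-twin of neither. So `M` would be 2-homogeneous.
-/

theorem Set.Infinite.exists_finset_pairwise {α : Type*} {r : α → α → Prop}
    (hr : ∀ a b, r a b → r b a) {A : Set α} (hA : A.Infinite)
    (hfin : ∀ a ∈ A, {b ∈ A | ¬ r b a}.Finite) (n : ℕ) :
    ∃ D : Finset α, ↑D ⊆ A ∧ D.card = n ∧ (D : Set α).Pairwise r := by
  classical
  induction n with
  | zero => exact ⟨∅, by simp, rfl, by simp⟩
  | succ n ih =>
    obtain ⟨D, hDA, hDcard, hD⟩ := ih
    have hbad : (↑D ∪ ⋃ d ∈ (D : Set α), {b ∈ A | ¬ r b d}).Finite :=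
      D.finite_toSet.union (D.finite_toSet.biUnion fun d hd => hfin d (hDA hd))
    obtain ⟨a, haA, ha⟩ := (hA.sdiff hbad).nonempty
    simp only [Set.mem_union, Finset.mem_coe, Set.mem_iUnion, Set.mem_sep_iff, not_or,
      not_exists, not_and, not_not] at ha
    refine ⟨insert a D, ?_, by rw [Finset.card_insert_of_notMem ha.1, hDcard], ?_⟩
    · simpa [Set.insert_subset_iff] using ⟨haA, hDA⟩
    · rw [Finset.coe_insert, Set.pairwise_insert_of_notMem ha.1]
      exact ⟨hD, fun d hd => ⟨ha.2 d hd haA, hr _ _ (ha.2 d hd haA)⟩⟩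

theorem Set.exists_finset_subset_card_eq {α : Type*} {s : Set α} {n : ℕ}
    (h : s.Finite → n ≤ s.ncard) : ∃ t : Finset α, ↑t ⊆ s ∧ t.card = n := by
  by_cases hs : s.Finite
  · obtain ⟨t, hts, htn⟩ := Set.exists_subset_card_eq (h hs)
    have ht := hs.subset hts
    exact ⟨ht.toFinset, by simpa using hts, by rw [← htn, Set.ncard_eq_toFinset_card t ht]⟩
  · exact Set.Infinite.exists_subset_card_eq hs n

section

variable {V : Type*} {M : SimpleGraph V} {k : ℕ}

theorem SamePairOrbit.symm {a b c d : V} (h : SamePairOrbit M a b c d) :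
    SamePairOrbit M c d a b := by
  obtain ⟨g, rfl, rfl⟩ := h
  exact ⟨g.symm, g.symm_apply_apply a, g.symm_apply_apply b⟩

theorem SamePairOrbit.trans {a b c d e f : V}
    (h : SamePairOrbit M a b c d) (h' : SamePairOrbit M c d e f) : SamePairOrbit M a b e f := by
  obtain ⟨g, rfl, rfl⟩ := h
  obtain ⟨g', rfl, rfl⟩ := h'
  exact ⟨g.trans g', rfl, rfl⟩

theorem IsNHom.sameOrbit (h1 : IsNHom M 1) (a b : V) : SameOrbit M a b := by
  let f : M.induce {a} ≃g M.induce {b} := ⟨Equiv.ofUnique _ _, by simp⟩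
  obtain ⟨g, hg⟩ := h1 {a} {b} (Set.finite_singleton a) (Set.finite_singleton b)
    (Set.ncard_singleton a) (Set.ncard_singleton b) f
  exact ⟨g, hg ⟨a, rfl⟩⟩

theorem isNHom_two_of_samePairOrbit
    (h : ∀ x y u v : V, x ≠ y → u ≠ v → (M.Adj x y ↔ M.Adj u v) → SamePairOrbit M x y u v) :
    IsNHom M 2 := by
  intro s t _ _ hs _ f
  obtain ⟨x, y, hxy, rfl⟩ := Set.ncard_eq_two.mp hs
  have hne : (f ⟨x, by simp⟩ : V) ≠ f ⟨y, by simp⟩ := fun he =>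
    hxy (congrArg Subtype.val (f.injective (Subtype.ext he)))
  obtain ⟨g, hgx, hgy⟩ :=
    h x y _ _ hxy hne (f.map_adj_iff (v := ⟨x, by simp⟩) (w := ⟨y, by simp⟩)).symm
  refine ⟨g, ?_⟩
  rintro ⟨z, rfl | rfl⟩
  exacts [hgx, hgy]

theorem GeqHom.exists_aut_extending (hM : GeqHom M k) {ι : Type*} [Finite ι]
    (hk : k ≤ Nat.card ι) {p q : ι → V} (hp : Function.Injective p) (hq : Function.Injective q)
    (hpq : ∀ i j, M.Adj (q i) (q j) ↔ M.Adj (p i) (p j)) :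
    ∃ g : M ≃g M, ∀ i, g (p i) = q i := by
  let e : Set.range p ≃ Set.range q :=
    (Equiv.ofInjective p hp).symm.trans (Equiv.ofInjective q hq)
  have he : ∀ i, e ⟨p i, i, rfl⟩ = ⟨q i, i, rfl⟩ := fun i => by
    simp only [e, Equiv.trans_apply, Equiv.ofInjective_symm_apply]
    rfl
  let f : M.induce (Set.range p) ≃g M.induce (Set.range q) := ⟨e, by
    rintro ⟨_, i, rfl⟩ ⟨_, j, rfl⟩
    simpa only [comap_adj, Function.Embedding.coe_subtype, he] using hpq i j⟩
  obtain ⟨g, hg⟩ := hM _ hk _ _ (Set.finite_range p) (Set.finite_range q)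
    (Set.ncard_range_of_injective hp) (Set.ncard_range_of_injective hq) f
  exact ⟨g, fun i => (hg ⟨p i, i, rfl⟩).trans (congrArg Subtype.val (he i))⟩

theorem isClique_range_of_top_embedding (f : (⊤ : SimpleGraph ℕ) ↪g M) :
    M.IsClique (Set.range f) := by
  rintro _ ⟨i, rfl⟩ _ ⟨j, rfl⟩ hij
  exact f.map_adj_iff.mpr fun h => hij (congrArg f h)

theorem HasKInf.exists_mem (hK : HasKInf M) (h1 : IsNHom M 1) (v : V) :
    ∃ f : (⊤ : SimpleGraph ℕ) ↪g M, v ∈ Set.range f := by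
  obtain ⟨f⟩ := hK
  obtain ⟨g, hg⟩ := h1.sameOrbit (f 0) v
  exact ⟨f.trans g.toRelEmbedding, 0, hg⟩

namespace SimpleGraph

def agreeSet (M : SimpleGraph V) (x y : V) : Set V := {w | M.Adj w x ↔ M.Adj w y}

def disagreeSet (M : SimpleGraph V) (x y : V) : Set V := {w | ¬ (M.Adj w x ↔ M.Adj w y)}

def IsNearTwin (M : SimpleGraph V) (x y : V) : Prop := (M.disagreeSet x y).Finite

def IsAntiTwin (M : SimpleGraph V) (x y : V) : Prop := (M.agreeSet x y).Finite

theorem isNearTwin_refl (x : V) : M.IsNearTwin x x := by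
  simp [IsNearTwin, disagreeSet]

theorem IsNearTwin.symm {x y : V} (h : M.IsNearTwin x y) : M.IsNearTwin y x :=
  h.subset fun _ hw => mt Iff.symm hw

theorem IsAntiTwin.symm {x y : V} (h : M.IsAntiTwin x y) : M.IsAntiTwin y x :=
  h.subset fun _ hw => Iff.symm hw

theorem IsNearTwin.trans {x y z : V} (h : M.IsNearTwin x y) (h' : M.IsNearTwin y z) :
    M.IsNearTwin x z :=
  (h.union h').subset fun _ hw => by
    simp only [disagreeSet, Set.mem_union, Set.mem_ofPred] at hw ⊢
    tauto

theorem IsAntiTwin.isNearTwin {x y z : V} (h : M.IsAntiTwin x y) (h' : M.IsAntiTwin x z) :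
    M.IsNearTwin y z :=
  (h.union h').subset fun _ hw => by
    simp only [agreeSet, disagreeSet, Set.mem_union, Set.mem_ofPred] at hw ⊢
    tauto

theorem IsAntiTwin.trans_isNearTwin {x y z : V} (h : M.IsAntiTwin x y) (h' : M.IsNearTwin y z) :
    M.IsAntiTwin x z :=
  (h.union h').subset fun _ hw => by
    simp only [agreeSet, disagreeSet, Set.mem_union, Set.mem_ofPred] at hw ⊢
    tauto

theorem IsAntiTwin.finite_adj_of_isClique {W : Set V} (hW : M.IsClique W)
    {m d₀ : V} (hd₀ : d₀ ∈ W) (hm : M.IsAntiTwin m d₀) : {d ∈ W | M.Adj m d}.Finite := by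
  refine (hm.union (Set.finite_singleton d₀)).subset ?_
  rintro d ⟨hdW, hmd⟩
  by_cases hdd₀ : d = d₀
  · exact Or.inr hdd₀
  · exact Or.inl (iff_of_true hmd.symm (hW hdW hd₀ hdd₀))

theorem IsNearTwin.not_isAntiTwin [Infinite V] {x y : V} (h : M.IsNearTwin x y) :
    ¬ M.IsAntiTwin x y := fun h' =>
  Set.infinite_univ ((h'.union h).subset fun w _ => em (M.Adj w x ↔ M.Adj w y))

theorem IsNearTwin.map {x y : V} (g : M ≃g M) (h : M.IsNearTwin x y) :
    M.IsNearTwin (g x) (g y) := by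
  refine (h.image g).subset fun w hw => ⟨g.symm w, ?_, g.apply_symm_apply w⟩
  rw [disagreeSet, Set.mem_ofPred, ← g.apply_symm_apply w, g.map_adj_iff, g.map_adj_iff] at hw
  exact hw

theorem isNearTwin_map_iff (g : M ≃g M) {x y : V} :
    M.IsNearTwin (g x) (g y) ↔ M.IsNearTwin x y :=
  ⟨fun h => by simpa using h.map g.symm, IsNearTwin.map g⟩

theorem exists_pairwise_adj_iff_of_isNearTwin {A : Set V} (hA : A.Infinite) {b : V} (P : Prop)
    (hAb : ∀ a ∈ A, M.Adj a b ↔ P) (hnt : ∀ a ∈ A, M.IsNearTwin a b) (n : ℕ) :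
    ∃ D : Finset V, ↑D ⊆ A ∧ D.card = n ∧ (D : Set V).Pairwise fun c d => M.Adj c d ↔ P :=
  hA.exists_finset_pairwise (fun c d h => by rwa [M.adj_comm]) (fun a ha =>
    (hnt a ha).subset fun c hc => by
      rw [disagreeSet, Set.mem_ofPred, hAb c hc.1]
      exact hc.2) n

theorem exists_isNClique_or_isNIndepSet {F : Set V} (hF : F.Infinite)
    (hFnt : F.Pairwise M.IsNearTwin) (n : ℕ) :
    ∃ D : Finset V, ↑D ⊆ F ∧ (M.IsNClique n D ∨ M.IsNIndepSet n D) := by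
  obtain ⟨b, hb⟩ := hF.nonempty
  have hside : ∀ P : Prop, {a ∈ F \ {b} | M.Adj a b ↔ P}.Infinite → ∃ D : Finset V,
      ↑D ⊆ F ∧ D.card = n ∧ (D : Set V).Pairwise fun c d => M.Adj c d ↔ P := fun P hP => by
    obtain ⟨D, hDA, hD⟩ := exists_pairwise_adj_iff_of_isNearTwin hP P (fun a ha => ha.2)
      (fun a ha => hFnt ha.1.1 hb ha.1.2) n
    exact ⟨D, hDA.trans fun a ha => ha.1.1, hD⟩
  have hsplit :
      F \ {b} = {a ∈ F \ {b} | M.Adj a b ↔ True} ∪ {a ∈ F \ {b} | M.Adj a b ↔ False} := by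
    ext a
    simp only [Set.mem_union, Set.mem_sep_iff, iff_true, iff_false]
    tauto
  rcases Set.infinite_union.mp (hsplit ▸ hF.sdiff (Set.finite_singleton b)) with h | h
  · obtain ⟨D, hDF, hcard, hD⟩ := hside True h
    exact ⟨D, hDF, Or.inl ⟨hD.imp fun _ _ h => h.mpr trivial, hcard⟩⟩
  · obtain ⟨D, hDF, hcard, hD⟩ := hside False h
    exact ⟨D, hDF, Or.inr ⟨hD.imp fun _ _ h => h.mp, hcard⟩⟩

def IsCliqueLinked (M : SimpleGraph V) (k : ℕ) (a b : V) : Prop :=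
  a ≠ b ∧ ¬ M.Adj a b ∧ ∃ C : Finset V, M.IsNClique k C ∧ ∀ c ∈ C, M.Adj a c ∧ M.Adj b c

theorem IsCliqueLinked.map (g : M ≃g M) {a b : V} (h : M.IsCliqueLinked k a b) :
    M.IsCliqueLinked k (g a) (g b) := by
  obtain ⟨hab, hadj, C, hC, hCadj⟩ := h
  refine ⟨g.injective.ne hab, by rwa [g.map_adj_iff], C.map g.toEquiv.toEmbedding, ⟨?_, ?_⟩, ?_⟩
  · rw [Finset.coe_map]
    rintro _ ⟨c, hc, rfl⟩ _ ⟨c', hc', rfl⟩ hne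
    exact g.map_adj_iff.mpr (hC.isClique hc hc' fun h => hne (congrArg g h))
  · rw [Finset.card_map, hC.card_eq]
  · simp only [Finset.mem_map, forall_exists_index, and_imp]
    rintro _ c hc rfl
    exact ⟨g.map_adj_iff.mpr (hCadj c hc).1, g.map_adj_iff.mpr (hCadj c hc).2⟩

def NearTwinIndepCover (M : SimpleGraph V) (k : ℕ) : Prop :=
  ∀ u, ∃ T : Finset V, u ∈ T ∧ M.IsNIndepSet k T ∧ (T : Set V).Pairwise M.IsNearTwin

end SimpleGraph

theorem GeqHom.exists_aut_swap [DecidableEq V] (hM : GeqHom M k) {s : Finset V}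
    (hk : k ≤ s.card) {y b : V} (hb : b ∉ s) (hagree : ∀ z ∈ s, z ≠ y → (M.Adj z y ↔ M.Adj z b)) :
    ∃ g : M ≃g M, ∀ z ∈ s, g z = Equiv.swap y b z := by
  have hfix : ∀ z ∈ s, z ≠ y → Equiv.swap y b z = z := fun z hz hzy =>
    Equiv.swap_apply_of_ne_of_ne hzy (ne_of_mem_of_not_mem hz hb)
  obtain ⟨g, hg⟩ := hM.exists_aut_extending (ι := s) (by simpa using hk)
    (p := Subtype.val) (q := fun z => Equiv.swap y b z) Subtype.val_injective
    ((Equiv.swap y b).injective.comp Subtype.val_injective) (by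
      rintro ⟨i, hi⟩ ⟨j, hj⟩
      by_cases hiy : i = y <;> by_cases hjy : j = y
      · simp [hiy, hjy]
      · subst hiy
        rw [Equiv.swap_apply_left, hfix j hj hjy, M.adj_comm, ← hagree j hj hjy, M.adj_comm]
      · subst hjy
        rw [Equiv.swap_apply_left, hfix i hi hiy, ← hagree i hi hiy]
      · rw [hfix i hi hiy, hfix j hj hjy])
  exact ⟨g, fun z hz => hg ⟨z, hz⟩⟩

theorem GeqHom.samePairOrbit_of_not_isAntiTwin (hM : GeqHom M k) {x y b : V} (hxy : x ≠ y)
    (hxb : x ≠ b) (hyb : y ≠ b) (hadj : M.Adj x y ↔ M.Adj x b) (hagree : ¬ M.IsAntiTwin y b) :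
    SamePairOrbit M x y x b := by
  classical
  obtain ⟨W, hWsub, hWcard⟩ :=
    (Set.Infinite.sdiff hagree (Set.toFinite {x, y, b})).exists_subset_card_eq (k - 2)
  have hW : ∀ w ∈ W, w ∈ M.agreeSet y b ∧ w ≠ x ∧ w ≠ y ∧ w ≠ b := fun w hw => by
    simpa using hWsub hw
  have hxW : x ∉ W := fun h => (hW x h).2.1 rfl
  have hyW : y ∉ W := fun h => (hW y h).2.2.1 rfl
  have hbW : b ∉ W := fun h => (hW b h).2.2.2 rfl
  obtain ⟨g, hg⟩ := hM.exists_aut_swap (s := insert x (insert y W)) (y := y) (b := b)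
    (by rw [Finset.card_insert_of_notMem (by simp [hxy, hxW]),
      Finset.card_insert_of_notMem hyW, hWcard]; omega)
    (by simp [hxb.symm, hyb.symm, hbW]) (by
      intro z hz hzy
      simp only [Finset.mem_insert] at hz
      rcases hz with rfl | rfl | hz
      · exact hadj
      · exact absurd rfl hzy
      · exact (hW z hz).1)
  exact ⟨g, (hg x (by simp)).trans (Equiv.swap_apply_of_ne_of_ne hxy hxb),
    (hg y (by simp)).trans (Equiv.swap_apply_left y b)⟩

theorem P2Rel.isCliqueLinked (hk : 1 ≤ k) {a b : V} (h : P2Rel M k a b) :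
    M.IsCliqueLinked k a b := by
  obtain ⟨hab, hadj, hp1⟩ := h
  simp only [P1Rel, not_and, not_forall] at hp1
  obtain ⟨f, haf, hbig⟩ := hp1 hab hadj
  obtain ⟨C, hC, hCcard⟩ := Set.exists_finset_subset_card_eq (n := k)
    (s := {c | c ∈ Set.range f ∧ M.Adj b c}) fun hfin => by
      have := hbig hfin
      omega
  have hCadj : ∀ c ∈ C, M.Adj a c := fun c hc =>
    isClique_range_of_top_embedding f haf (hC hc).1 fun h => hadj (h ▸ (hC hc).2).symm
  refine ⟨hab, hadj, C, ⟨?_, hCcard⟩, fun c hc => ⟨hCadj c hc, (hC hc).2⟩⟩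
  exact (isClique_range_of_top_embedding f).subset fun c hc => (hC hc).1

theorem IsNHom.infinite_isCliqueLinked (h1 : IsNHom M 1) {a : V}
    (ha : {b | M.IsCliqueLinked k a b}.Infinite) (v : V) :
    {b | M.IsCliqueLinked k v b}.Infinite := by
  obtain ⟨g, rfl⟩ := h1.sameOrbit a v
  exact (ha.image g.injective.injOn).mono (Set.image_subset_iff.mpr fun b hb => hb.map g)

theorem GeqHom.isNearTwin_of_pairwise (hM : GeqHom M k) (hk : 2 ≤ k) (P : Prop)
    {s₀ s : Finset V} (hs₀ : s₀.card = k)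
    (hs₀P : (s₀ : Set V).Pairwise fun a b => M.Adj a b ↔ P)
    (hs₀nt : (s₀ : Set V).Pairwise M.IsNearTwin) (hs : k ≤ s.card)
    (hsP : (s : Set V).Pairwise fun a b => M.Adj a b ↔ P) :
    (s : Set V).Pairwise M.IsNearTwin := by
  classical
  intro x hx y hy hxy
  obtain ⟨t, hxyt, hts, htcard⟩ := Finset.exists_subsuperset_card_eq (s := {x, y}) (n := k)
    (Finset.insert_subset_iff.mpr ⟨hx, Finset.singleton_subset_iff.mpr hy⟩)
    (by rw [Finset.card_pair hxy]; exact hk) hs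
  have hxt : x ∈ t := hxyt (by simp)
  have hyt : y ∈ t := hxyt (by simp)
  let e : t ≃ s₀ := Finset.equivOfCardEq (htcard.trans hs₀.symm)
  have he : ∀ {i j : t}, i ≠ j → (e i : V) ≠ e j := fun hij h =>
    hij (e.injective (Subtype.ext h))
  obtain ⟨g, hg⟩ := hM.exists_aut_extending (ι := t) (by simp [htcard])
    (p := Subtype.val) (q := fun i => (e i : V)) Subtype.val_injective
    (Subtype.val_injective.comp e.injective) fun i j => by
      by_cases hij : i = j
      · simp [hij]
      · exact (hs₀P (e i).2 (e j).2 (he hij)).trans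
          (hsP (hts i.2) (hts j.2) fun h => hij (Subtype.ext h)).symm
  have hgx : g x = e ⟨x, hxt⟩ := hg ⟨x, hxt⟩
  have hgy : g y = e ⟨y, hyt⟩ := hg ⟨y, hyt⟩
  rw [← isNearTwin_map_iff g, hgx, hgy]
  exact hs₀nt (e _).2 (e _).2 (he fun h => hxy (congrArg Subtype.val h))

theorem GeqHom.nearTwinIndepCover_of_isNClique (hM : GeqHom M k) (hk : 2 ≤ k)
    (hL : ∀ u, {b | M.IsCliqueLinked k u b}.Infinite) {D₀ : Finset V}
    (hD₀ : M.IsNClique k D₀) (hD₀nt : (D₀ : Set V).Pairwise M.IsNearTwin) :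
    M.NearTwinIndepCover k := by
  classical
  have hlinked : ∀ {u b}, M.IsCliqueLinked k u b → M.IsNearTwin u b := by
    rintro u b ⟨-, -, C, hC, hCadj⟩
    obtain ⟨c, hc⟩ : C.Nonempty := Finset.card_pos.mp (by rw [hC.card_eq]; omega)
    have hnt : ∀ {x}, (∀ c ∈ C, M.Adj x c) → M.IsNearTwin x c := fun hx =>
      have hxC := hC.insert hx
      hM.isNearTwin_of_pairwise hk True hD₀.card_eq (hD₀.isClique.imp fun _ _ => iff_true_intro)
        hD₀nt (by rw [hxC.card_eq]; omega) (hxC.isClique.imp fun _ _ => iff_true_intro)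
        (Finset.mem_insert_self _ _) (Finset.mem_insert_of_mem hc) (hx c hc).ne
    exact (hnt fun c hc => (hCadj c hc).1).trans (hnt fun c hc => (hCadj c hc).2).symm
  intro u
  obtain ⟨S, hSL, hScard, hS⟩ := exists_pairwise_adj_iff_of_isNearTwin (hL u) False
    (fun a ha => iff_false_intro fun h => ha.2.1 h.symm) (fun a ha => (hlinked ha).symm) (k - 1)
  have huS : u ∉ S := fun h => (hSL h).1 rfl
  have hSu : ∀ p ∈ insert u S, M.IsNearTwin u p := by
    simp only [Finset.mem_insert, forall_eq_or_imp]
    exact ⟨isNearTwin_refl u, fun p hp => hlinked (hSL hp)⟩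
  refine ⟨insert u S, Finset.mem_insert_self u S, ⟨?_, ?_⟩,
    fun p hp q hq _ => (hSu p hp).symm.trans (hSu q hq)⟩
  · rw [Finset.coe_insert, isIndepSet_iff, Set.pairwise_insert_of_notMem huS]
    exact ⟨hS.imp fun _ _ h => h.mp, fun b hb => ⟨(hSL hb).2.1, fun h => (hSL hb).2.1 h.symm⟩⟩
  · rw [Finset.card_insert_of_notMem huS, hScard]
    omega

theorem IsNHom.nearTwinIndepCover_of_isNIndepSet (h1 : IsNHom M 1) (hk : 1 ≤ k)
    {T₀ : Finset V} (hT₀ : M.IsNIndepSet k T₀) (hT₀nt : (T₀ : Set V).Pairwise M.IsNearTwin) :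
    M.NearTwinIndepCover k := by
  obtain ⟨t, ht⟩ : T₀.Nonempty := Finset.card_pos.mp (by rw [hT₀.card_eq]; omega)
  intro u
  obtain ⟨g, rfl⟩ := h1.sameOrbit t u
  have hinj : Set.InjOn g T₀ := g.injective.injOn
  refine ⟨T₀.map g.toEquiv.toEmbedding, Finset.mem_map_of_mem _ ht, ⟨?_, ?_⟩, ?_⟩
  · rw [Finset.coe_map, isIndepSet_iff]
    exact hinj.pairwise_image.mpr
      (hT₀.isIndepSet.imp fun a b h => by rwa [Function.onFun, g.map_adj_iff])
  · rw [Finset.card_map, hT₀.card_eq]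
  · rw [Finset.coe_map]
    exact hinj.pairwise_image.mpr (hT₀nt.imp fun a b h => h.map g)

theorem GeqHom.nearTwinIndepCover_of_infinite (hM : GeqHom M k) (hk : 2 ≤ k) (h1 : IsNHom M 1)
    (hL : ∀ u, {b | M.IsCliqueLinked k u b}.Infinite) {F : Set V} (hF : F.Infinite)
    (hFnt : F.Pairwise M.IsNearTwin) : M.NearTwinIndepCover k := by
  obtain ⟨D, hDF, hD | hD⟩ := exists_isNClique_or_isNIndepSet hF hFnt k
  · exact hM.nearTwinIndepCover_of_isNClique hk hL hD (hFnt.mono hDF)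
  · exact h1.nearTwinIndepCover_of_isNIndepSet (by omega) hD (hFnt.mono hDF)

theorem GeqHom.isAntiTwin_of_not_isNearTwin (hM : GeqHom M k) (hk : 3 ≤ k)
    (hC : M.NearTwinIndepCover k) {u z : V} (huz : u ≠ z) (hadj : ¬ M.Adj u z)
    (hnt : ¬ M.IsNearTwin u z) : M.IsAntiTwin u z := by
  classical
  obtain ⟨T, hzT, hT, hTnt⟩ := hC z
  obtain ⟨b, hb⟩ : (T \ {z, u}).Nonempty := by
    rw [← Finset.card_pos]
    have := Finset.le_card_sdiff {z, u} T
    have := Finset.card_le_two (a := z) (b := u)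
    have := hT.card_eq
    omega
  simp only [Finset.mem_sdiff, Finset.mem_insert, Finset.mem_singleton, not_or] at hb
  obtain ⟨hbT, hbz, hbu⟩ := hb
  have hzb : M.IsNearTwin z b := hTnt hzT hbT (Ne.symm hbz)
  by_cases hub : M.IsAntiTwin u b
  · exact hub.trans_isNearTwin hzb.symm
  · obtain ⟨g, hgz, hgu⟩ := hM.samePairOrbit_of_not_isAntiTwin huz.symm (Ne.symm hbz)
      (Ne.symm hbu) (iff_of_false (fun h => hadj h.symm) (hT.isIndepSet hzT hbT (Ne.symm hbz)))
      hub
    refine absurd ?_ hnt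
    rw [← isNearTwin_map_iff g, hgu, hgz]
    exact hzb.symm

theorem GeqHom.finite_of_isClique_of_isAntiTwin [Infinite V] (hM : GeqHom M k) (hk : 2 ≤ k)
    (hC : M.NearTwinIndepCover k) {u v : V} (huv : M.IsAntiTwin u v) {W : Set V}
    (hW : M.IsClique W) (hWv : ∀ d ∈ W, M.IsNearTwin v d) : W.Finite := by
  classical
  by_contra hWinf
  obtain ⟨T, huT, hT, hTnt⟩ := hC u
  have hTv : ∀ m ∈ T, M.IsAntiTwin m v := fun m hm => by
    by_cases hmu : m = u
    · exact hmu ▸ huv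
    · exact (huv.symm.trans_isNearTwin (hTnt huT hm (Ne.symm hmu))).symm
  have hTW : ∀ m ∈ T, {d ∈ W | M.Adj m d}.Finite := fun m hm =>
    let ⟨d₀, hd₀⟩ := Set.Infinite.nonempty hWinf
    ((hTv m hm).trans_isNearTwin (hWv d₀ hd₀)).finite_adj_of_isClique hW hd₀
  -- such a `d` extends `T` to an independent set, so it is a near-twin of `u` as well as of `v`
  obtain ⟨d, hdW, hd⟩ := (Set.Infinite.sdiff hWinf (T.finite_toSet.union
    (T.finite_toSet.biUnion fun m hm => hTW m hm))).nonempty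
  simp only [Set.mem_union, Finset.mem_coe, Set.mem_iUnion, Set.mem_sep_iff, not_or,
    not_exists, not_and] at hd
  obtain ⟨hdT, hdadj⟩ := hd
  have hindep : (↑(insert d T) : Set V).Pairwise fun a b => M.Adj a b ↔ False := by
    rw [Finset.coe_insert, Set.pairwise_insert_of_notMem hdT]
    exact ⟨hT.isIndepSet.imp fun _ _ => iff_false_intro,
      fun m hm => ⟨iff_false_intro fun h => hdadj m hm hdW h.symm,
        iff_false_intro (hdadj m hm hdW)⟩⟩
  have hdu : M.IsNearTwin d u :=
    hM.isNearTwin_of_pairwise hk False hT.card_eq (hT.isIndepSet.imp fun _ _ => iff_false_intro)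
      hTnt (by rw [Finset.card_insert_of_notMem hdT, hT.card_eq]; omega) hindep
      (Finset.mem_insert_self d T) (Finset.mem_insert_of_mem huT) fun h => hdT (h ▸ huT)
  exact ((hWv d hdW).trans hdu).not_isAntiTwin huv.symm

theorem GeqHom.not_isAntiTwin [Infinite V] (hM : GeqHom M k) (hk : 3 ≤ k)
    (hC : M.NearTwinIndepCover k) (hK : HasKInf M) (u v : V) : ¬ M.IsAntiTwin u v := by
  intro huv
  obtain ⟨f⟩ := hK
  have hadj_of_not_isNearTwin : ∀ {x y d}, M.IsAntiTwin x y → d ≠ x →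
      ¬ M.IsNearTwin x d → ¬ M.IsNearTwin y d → M.Adj d x := fun hxy hdx hx hy => by
    by_contra hdx'
    exact hy (hxy.isNearTwin
      (hM.isAntiTwin_of_not_isNearTwin hk hC hdx.symm (fun h => hdx' h.symm) hx))
  have hsub : Set.range f ⊆ M.agreeSet u v ∪ {u, v} ∪
      {d ∈ Set.range f | M.IsNearTwin u d} ∪ {d ∈ Set.range f | M.IsNearTwin v d} := by
    intro d hd
    by_contra h
    simp only [Set.mem_union, Set.mem_insert_iff, Set.mem_singleton_iff, Set.mem_sep_iff,
      not_or, not_and] at h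
    obtain ⟨⟨⟨hagr, hdu, hdv⟩, hu⟩, hv⟩ := h
    exact hagr (iff_of_true (hadj_of_not_isNearTwin huv hdu (hu hd) (hv hd))
      (hadj_of_not_isNearTwin huv.symm hdv (hv hd) (hu hd)))
  have hfin : ∀ {x y}, M.IsAntiTwin x y → {d ∈ Set.range f | M.IsNearTwin y d}.Finite :=
    fun hxy => hM.finite_of_isClique_of_isAntiTwin (by omega) hC hxy
      ((isClique_range_of_top_embedding f).subset fun _ hd => hd.1) fun _ hd => hd.2
  exact Set.infinite_range_of_injective f.injective
    ((((huv.union (Set.toFinite _)).union (hfin huv.symm)).union (hfin huv)).subset hsub)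

theorem GeqHom.finite_isAntiTwin [Infinite V] (hM : GeqHom M k) (hk : 3 ≤ k) (h1 : IsNHom M 1)
    (hK : HasKInf M) (hL : ∀ u, {b | M.IsCliqueLinked k u b}.Infinite) (y : V) :
    {b | M.IsAntiTwin y b}.Finite := by
  by_contra hF
  obtain ⟨b, hb⟩ := Set.Infinite.nonempty hF
  have hC := hM.nearTwinIndepCover_of_infinite (by omega) h1 hL hF
    fun _ ha _ hc _ => IsAntiTwin.isNearTwin ha hc
  exact hM.not_isAntiTwin hk hC hK y b hb

theorem infinite_setOf_adj_iff (h1 : IsNHom M 1) (hK : HasKInf M)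
    (hL : ∀ u, {b | M.IsCliqueLinked k u b}.Infinite) (u v : V) :
    {b | b ≠ u ∧ (M.Adj u b ↔ M.Adj u v)}.Infinite := by
  by_cases huv : M.Adj u v
  · obtain ⟨f, hu⟩ := hK.exists_mem h1 u
    refine ((Set.infinite_range_of_injective f.injective).sdiff (Set.finite_singleton u)).mono ?_
    rintro b ⟨hb, hbu⟩
    exact ⟨hbu, iff_of_true (isClique_range_of_top_embedding f hu hb (Ne.symm hbu)) huv⟩
  · exact (hL u).mono fun b hb => ⟨Ne.symm hb.1, iff_of_false hb.2.1 huv⟩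

theorem GeqHom.isNHom_two_of_finite_isAntiTwin (hM : GeqHom M k) (h1 : IsNHom M 1) (hK : HasKInf M)
    (hL : ∀ u, {b | M.IsCliqueLinked k u b}.Infinite)
    (hfin : ∀ y, {b | M.IsAntiTwin y b}.Finite) : IsNHom M 2 := by
  refine isNHom_two_of_samePairOrbit fun x y u v hxy huv hadj => ?_
  obtain ⟨g, rfl⟩ := h1.sameOrbit x u
  obtain ⟨b, ⟨hbx, hb⟩, hb'⟩ := ((infinite_setOf_adj_iff h1 hK hL (g x) v).sdiff
    (((hfin (g y)).union (hfin v)).union (Set.toFinite {g y, v}))).nonempty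
  simp only [Set.mem_union, Set.mem_ofPred, Set.mem_insert_iff, Set.mem_singleton_iff,
    not_or] at hb'
  obtain ⟨⟨hyb, hvb⟩, hby, hbv⟩ := hb'
  have h₁ : SamePairOrbit M x y (g x) b := SamePairOrbit.trans ⟨g, rfl, rfl⟩
    (hM.samePairOrbit_of_not_isAntiTwin (g.injective.ne hxy) (Ne.symm hbx) (Ne.symm hby)
      ((g.map_adj_iff.trans hadj).trans hb.symm) hyb)
  exact h₁.trans (hM.samePairOrbit_of_not_isAntiTwin huv (Ne.symm hbx) (Ne.symm hbv) hb.symm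
    hvb).symm

end

theorem stmt9_general {V : Type} [Infinite V] (M : SimpleGraph V) (k : ℕ)
    (hM : GeqHom M k) (h1 : IsNHom M 1) (h2 : ¬ IsNHom M 2) (hK : HasKInf M) :
    ∀ a : V, {b | P2Rel M k a b}.Finite := by
  intro a
  refine Set.not_infinite.mp fun ha => ?_
  have hk : 3 ≤ k := by
    by_contra hk
    exact h2 (hM 2 (by omega))
  have hL : ∀ v, {b | M.IsCliqueLinked k v b}.Infinite :=
    h1.infinite_isCliqueLinked (ha.mono fun b hb => hb.isCliqueLinked (by omega))
  exact h2 (hM.isNHom_two_of_finite_isAntiTwin h1 hK hL (hM.finite_isAntiTwin hk h1 hK hL))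

theorem stmt9 {V : Type} [Countable V] [Infinite V] (M : SimpleGraph V) (k : ℕ)
    (hM : GeqHom M k) (h1 : IsNHom M 1) (h2 : ¬ IsNHom M 2) (hK : HasKInf M) :
    ∀ a : V, {b | P2Rel M k a b}.Finite :=
  stmt9_general M k hM h1 h2 hK
end

section
/- For every t ≥ 2, the graph H_{t,2} is ≥(4t+1)-homogeneous: every isomorphism between finite induced subgraphs of size at least 4t+1 extends to an automorphism of H_{t,2}. -/
open SimpleGraph

/-!
In `H_{t,2}`, coordinatised as (side, column, index), two vertices are adjacent iff
"same side ↔ different column". If `x`, `y` share a column, every `z` is adjacent to exactly one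
of them iff `x ~ y`; if not, a `z` outside both columns is adjacent to exactly one of them iff
`x ≁ y`. Two columns hold only `4t` vertices, so in an induced subgraph on `≥ 4t + 1` vertices
such a `z` exists, and "same column", hence also "same side", is expressed by adjacency inside
the subgraph. An isomorphism between two such subgraphs therefore respects both relations, and any
such partial map extends to an automorphism: permute the sides, the columns, and the indices in
each (side, column) fibre.
-/

open Cardinal in
theorem Equiv.Perm.exists_apply_eq_of_eq_iff_eq {ι β : Type*} [Finite ι] (u w : ι → β)
    (h : ∀ i j, w i = w j ↔ u i = u j) : ∃ σ : Equiv.Perm β, ∀ i, σ (u i) = w i := by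
  choose r hr using fun b : Set.range u => b.2
  have hrw : ∀ i, w (r ⟨u i, i, rfl⟩) = w i := fun i => (h _ _).2 (hr _)
  let g : Set.range u ↪ β :=
    ⟨fun b => w (r b), fun b c hbc => Subtype.ext <| by rw [← hr b, ← hr c]; exact (h _ _).1 hbc⟩
  suffices ∃ σ : β ≃ β, ∀ b : Set.range u, σ b = g b from
    this.imp fun σ hσ i => (hσ ⟨u i, i, rfl⟩).trans (hrw i)
  cases finite_or_infinite β
  · exact extend_function_finite g ⟨.refl β⟩
  · exact extend_function_of_lt g
      ((Set.finite_range u).lt_aleph0.trans_le (aleph0_le_mk β)) ⟨.refl β⟩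

namespace Ht2

variable {t : ℕ}

abbrev Vertex (t : ℕ) : Type := (ℤ × Fin t) ⊕ (ℤ × Fin t)

def coords : Vertex t ≃ Bool × ℤ × Fin t := (Equiv.boolProdEquivSum _).symm

def side (v : Vertex t) : Bool := (coords v).1

def col (v : Vertex t) : ℤ := (coords v).2.1

def idx (v : Vertex t) : Fin t := (coords v).2.2

lemma ext_iff {x y : Vertex t} :
    x = y ↔ side x = side y ∧ col x = col y ∧ idx x = idx y := by
  rw [← coords.apply_eq_iff_eq, Prod.ext_iff, Prod.ext_iff]; rfl

lemma idx_eq_iff_eq {x y : Vertex t} (hs : side x = side y) (hc : col x = col y) :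
    idx x = idx y ↔ x = y := by
  simp [ext_iff, hs, hc]

lemma adj_iff {x y : Vertex t} :
    (Ht2 t).Adj x y ↔ (side x = side y ↔ col x ≠ col y) := by
  cases x <;> cases y <;> simp [Ht2, side, col, coords]

def shearAut (τ : Equiv.Perm Bool) (σ : Equiv.Perm ℤ) (π : Bool → ℤ → Equiv.Perm (Fin t)) :
    Ht2 t ≃g Ht2 t where
  toEquiv := coords.trans ((Equiv.prodShear τ fun b => Equiv.prodShear σ (π b)).trans coords.symm)
  map_rel_iff' := by
    intro x y
    simp [adj_iff, side, col]

lemma coords_shearAut (τ : Equiv.Perm Bool) (σ : Equiv.Perm ℤ) (π : Bool → ℤ → Equiv.Perm (Fin t))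
    (v : Vertex t) :
    coords (shearAut τ σ π v) = (τ (side v), σ (col v), π (side v) (col v) (idx v)) := by
  simp [shearAut, side, col, idx]

lemma exists_mem_col_ne {s : Set (Vertex t)} (hs : 4 * t + 1 ≤ s.ncard)
    (a c : ℤ) : ∃ z ∈ s, col z ≠ a ∧ col z ≠ c := by
  by_contra! h
  let T : Finset (Bool × ℤ × Fin t) := Finset.univ ×ˢ {a, c} ×ˢ Finset.univ
  have hsub : s ⊆ ↑(T.map coords.symm.toEmbedding) := fun z hz => by
    refine Finset.mem_map_equiv.2 (Finset.mem_product.2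
      ⟨Finset.mem_univ _, Finset.mem_product.2 ⟨?_, Finset.mem_univ _⟩⟩)
    change col z ∈ ({a, c} : Finset ℤ)
    rw [Finset.mem_insert, Finset.mem_singleton]
    exact (em _).imp_right (h z hz)
  have hT : T.card ≤ 2 * (2 * t) := by
    simp only [T, Finset.card_product, Finset.card_univ, Fintype.card_bool, Fintype.card_fin]
    gcongr
    exact Finset.card_le_two
  have := Set.ncard_le_ncard hsub (Finset.finite_toSet _)
  rw [Set.ncard_coe_finset, Finset.card_map] at this
  omega

lemma adj_iff_not_adj_iff_of_col_eq {x y : Vertex t} (h : col x = col y)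
    (z : Vertex t) :
    (Ht2 t).Adj x y ↔ ¬((Ht2 t).Adj z x ↔ (Ht2 t).Adj z y) := by
  simp only [adj_iff, h]
  cases side x <;> cases side y <;> cases side z <;> tauto

lemma adj_iff_adj_iff_of_col_ne {x y z : Vertex t} (h : col x ≠ col y)
    (hx : col z ≠ col x) (hy : col z ≠ col y) :
    (Ht2 t).Adj x y ↔ ((Ht2 t).Adj z x ↔ (Ht2 t).Adj z y) := by
  simp only [adj_iff]
  cases side x <;> cases side y <;> cases side z <;> simp [h, hx, hy]

lemma col_eq_iff_forall_adj {s : Set (Vertex t)} (hs : 4 * t + 1 ≤ s.ncard)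
    {x y : Vertex t} :
    col x = col y ↔ ∀ z : s, (Ht2 t).Adj x y ↔ ¬((Ht2 t).Adj z x ↔ (Ht2 t).Adj z y) := by
  refine ⟨fun h z => adj_iff_not_adj_iff_of_col_eq h z, fun h => ?_⟩
  by_contra hxy
  obtain ⟨z, hz, hzx, hzy⟩ := exists_mem_col_ne hs (col x) (col y)
  have := adj_iff_adj_iff_of_col_ne hxy hzx hzy
  have := h ⟨z, hz⟩
  tauto

variable {s₁ s₂ : Set (Vertex t)}

lemma col_iso_eq_iff (hs₁ : 4 * t + 1 ≤ s₁.ncard) (hs₂ : 4 * t + 1 ≤ s₂.ncard)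
    (f : (Ht2 t).induce s₁ ≃g (Ht2 t).induce s₂) (x y : s₁) :
    col (f x).1 = col (f y).1 ↔ col x.1 = col y.1 := by
  rw [col_eq_iff_forall_adj hs₂, col_eq_iff_forall_adj hs₁]
  refine (f.toEquiv.forall_congr fun z => ?_).symm
  exact iff_congr f.map_adj_iff.symm (not_congr (iff_congr f.map_adj_iff f.map_adj_iff)).symm

lemma side_iso_eq_iff (hs₁ : 4 * t + 1 ≤ s₁.ncard) (hs₂ : 4 * t + 1 ≤ s₂.ncard)
    (f : (Ht2 t).induce s₁ ≃g (Ht2 t).induce s₂) (x y : s₁) :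
    side (f x).1 = side (f y).1 ↔ side x.1 = side y.1 := by
  have hadj : (Ht2 t).Adj (f x) (f y) ↔ (Ht2 t).Adj x y := f.map_adj_iff
  have hcol := col_iso_eq_iff hs₁ hs₂ f x y
  rw [adj_iff, adj_iff] at hadj
  tauto

lemma exists_shearAut_extend {s : Set (Vertex t)} [Finite s] (φ : s → Vertex t)
    (hφ : Function.Injective φ) (hside : ∀ x y, side (φ x) = side (φ y) ↔ side x.1 = side y.1)
    (hcol : ∀ x y, col (φ x) = col (φ y) ↔ col x.1 = col y.1) :
    ∃ g : Ht2 t ≃g Ht2 t, ∀ x : s, g x = φ x := by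
  obtain ⟨τ, hτ⟩ := Equiv.Perm.exists_apply_eq_of_eq_iff_eq _ _ hside
  obtain ⟨σ, hσ⟩ := Equiv.Perm.exists_apply_eq_of_eq_iff_eq _ _ hcol
  have hfiber (b : Bool) (a : ℤ) (x y : {x : s // side x.1 = b ∧ col x.1 = a}) :
      idx (φ x) = idx (φ y) ↔ idx x.1.1 = idx y.1.1 := by
    have hs : side x.1.1 = side y.1.1 := x.2.1.trans y.2.1.symm
    have hc : col x.1.1 = col y.1.1 := x.2.2.trans y.2.2.symm
    rw [idx_eq_iff_eq ((hside _ _).2 hs) ((hcol _ _).2 hc), idx_eq_iff_eq hs hc, hφ.eq_iff,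
      Subtype.ext_iff]
  choose π hπ using fun b a => Equiv.Perm.exists_apply_eq_of_eq_iff_eq _ _ (hfiber b a)
  refine ⟨shearAut τ σ π, fun x => coords.injective ?_⟩
  rw [coords_shearAut, hτ x, hσ x, hπ _ _ ⟨x, rfl, rfl⟩]
  rfl

end Ht2

open Ht2 in
theorem stmt16_general (t : ℕ) :
    GeqHom (Ht2 t) (4 * t + 1) := by
  intro n hn s₁ s₂ hs₁ _ hc₁ hc₂ f
  have := hs₁.to_subtype
  have h₁ : 4 * t + 1 ≤ s₁.ncard := hc₁ ▸ hn
  have h₂ : 4 * t + 1 ≤ s₂.ncard := hc₂ ▸ hn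
  exact exists_shearAut_extend (fun x => (f x).1) (Subtype.val_injective.comp f.injective)
    (side_iso_eq_iff h₁ h₂ f) (col_iso_eq_iff h₁ h₂ f)

theorem stmt16 (t : ℕ) (ht : 2 ≤ t) :
    GeqHom (Ht2 t) (4 * t + 1) :=
  stmt16_general t
end

section
/- Let M be an infinite graph that is ≥k-homogeneous, 1-homogeneous and 2-homogeneous, with K_∞ ⊆ M. Suppose n is minimal such that M is not n-homogeneous, and let A, B be induced subgraphs of size n that are isomorphic via f but lie in different orbits of Aut(M). Fix a ∈ A, let G = A − {a}, and let b be such that G ∪ {b} lies in the same orbit as B (with b corresponding to f(a)). Then a is not adjacent to b. -/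
open SimpleGraph

/-!
Suppose `a ~ b`. The automorphism `g` agrees with `f` on `A \ {a}` and sends `b` to `f a`, so
`b` has the same neighbours in `A \ {a}` as `a`. By 2-homogeneity the edge `ab` lies in an induced
`K_∞`; adding `k` vertices of it to `A ∪ {b}` gives a finite set of size at least `k` on which the
transposition of `a` and `b` is an isomorphism. By `≥k`-homogeneity it extends to an automorphism
`h`, and then `g ∘ h` extends `f`, which is impossible.
-/

section
variable {V : Type*} {M : SimpleGraph V}

theorem IsNHom.exists_aut_of_adj_iff {ι : Type*} [Finite ι] {n : ℕ} (hM : IsNHom M n)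
    (hι : Nat.card ι = n) {u v : ι → V} (hu : u.Injective) (hv : v.Injective)
    (huv : ∀ i j, M.Adj (v i) (v j) ↔ M.Adj (u i) (u j)) :
    ∃ g : M ≃g M, ∀ i, g (u i) = v i := by
  let e : Set.range u ≃ Set.range v :=
    (Equiv.ofInjective u hu).symm.trans (Equiv.ofInjective v hv)
  have he : ∀ i, e ⟨u i, i, rfl⟩ = ⟨v i, i, rfl⟩ := fun i => by
    simp [e, Equiv.ofInjective_symm_apply]
  have hadj : ∀ {x y : Set.range u},
      (M.induce (Set.range v)).Adj (e x) (e y) ↔ (M.induce (Set.range u)).Adj x y := by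
    rintro ⟨_, i, rfl⟩ ⟨_, j, rfl⟩
    simpa only [he, induce_adj] using huv i j
  obtain ⟨g, hg⟩ := hM _ _ (Set.finite_range u) (Set.finite_range v)
    (by rw [Set.ncard_range_of_injective hu, hι]) (by rw [Set.ncard_range_of_injective hv, hι])
    ⟨e, hadj⟩
  exact ⟨g, fun i => by simpa [he] using hg ⟨u i, i, rfl⟩⟩

theorem IsNHom.samePairOrbit_of_adj (h2 : IsNHom M 2) {x y c d : V} (hxy : M.Adj x y)
    (hcd : M.Adj c d) : SamePairOrbit M x y c d := by
  obtain ⟨g, hg⟩ := h2.exists_aut_of_adj_iff (u := ![x, y]) (v := ![c, d]) (by simp)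
    (by simpa [Fin.cons_injective_iff] using hxy.ne) (by simpa [Fin.cons_injective_iff] using hcd.ne)
    (by intro i j; fin_cases i <;> fin_cases j <;> simp [hxy, hcd, hxy.symm, hcd.symm])
  exact ⟨g, hg 0, hg 1⟩

theorem inCommonKInf_of_adj (h2 : IsNHom M 2) (hK : HasKInf M) {a b : V} (hab : M.Adj a b) :
    InCommonKInf M a b := by
  obtain ⟨e⟩ := hK
  obtain ⟨g, hg0, hg1⟩ :=
    h2.samePairOrbit_of_adj (e.map_rel_iff.mpr (by simp : (⊤ : SimpleGraph ℕ).Adj 0 1)) hab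
  exact ⟨e.trans g.toRelEmbedding, ⟨0, hg0⟩, ⟨1, hg1⟩⟩

theorem adj_swap_iff_of_twins [DecidableEq V] {T : Set V} {a b : V}
    (htwin : ∀ x ∈ T, x ≠ a → x ≠ b → (M.Adj a x ↔ M.Adj b x)) {x y : V} (hx : x ∈ T)
    (hy : y ∈ T) : M.Adj (Equiv.swap a b x) (Equiv.swap a b y) ↔ M.Adj x y := by
  have := htwin x hx
  have := htwin y hy
  simp only [Equiv.swap_apply_def]
  split_ifs <;> subst_vars <;> grind [M.adj_comm, M.irrefl]

theorem GeqHom.exists_aut_eq_swap [DecidableEq V] {k : ℕ} (hM : GeqHom M k) {a b : V}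
    (hab : InCommonKInf M a b) {S : Set V} (hS : S.Finite)
    (htwin : ∀ x ∈ S, x ≠ a → x ≠ b → (M.Adj a x ↔ M.Adj b x)) :
    ∃ g : M ≃g M, ∀ x ∈ S, g x = Equiv.swap a b x := by
  obtain ⟨e, ⟨i, rfl⟩, ⟨j, rfl⟩⟩ := hab
  obtain ⟨C, hCe, hCfin, hCk⟩ :=
    (Set.infinite_range_of_injective e.injective).exists_subset_ncard_eq k
  set T := insert (e i) (insert (e j) (S ∪ C))
  have hT : T.Finite := ((hS.union hCfin).insert _).insert _
  have hkT : k ≤ T.ncard :=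
    hCk ▸ Set.ncard_le_ncard (fun x hx => .inr (.inr (.inr hx))) hT
  have htwinT : ∀ x ∈ T, x ≠ e i → x ≠ e j → (M.Adj (e i) x ↔ M.Adj (e j) x) := by
    rintro x (rfl | rfl | hxS | hxC) hxi hxj
    · exact absurd rfl hxi
    · exact absurd rfl hxj
    · exact htwin x hxS hxi hxj
    · obtain ⟨m, rfl⟩ := hCe hxC
      simp only [e.map_adj_iff, top_adj]
      exact iff_of_true (fun h => hxi (h ▸ rfl)) (fun h => hxj (h ▸ rfl))
  have := hT.to_subtype
  obtain ⟨g, hg⟩ := (hM T.ncard hkT).exists_aut_of_adj_iff (Nat.card_coe_set_eq T)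
    (u := ((↑) : T → V)) (v := fun x => Equiv.swap (e i) (e j) x) Subtype.val_injective
    ((Equiv.injective _).comp Subtype.val_injective)
    (fun x y => adj_swap_iff_of_twins htwinT x.2 y.2)
  exact ⟨g, fun x hx => hg ⟨x, .inr (.inr (.inl hx))⟩⟩

end

theorem stmt18_general {V : Type} (M : SimpleGraph V) (k : ℕ)
    (hM : GeqHom M k) (h2 : IsNHom M 2) (hK : HasKInf M)
    (A B : Set V) (hA : A.Finite)
    (f : M.induce A ≃g M.induce B)
    (hdiff : ¬ ∃ g : M ≃g M, ∀ x : A, g x.val = (f x).val)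
    (a : V) (ha : a ∈ A) (b : V)
    (hb : ∃ g : M ≃g M, (∀ x : A, x.val ≠ a → g x.val = (f x).val) ∧
      g b = (f ⟨a, ha⟩).val) :
    ¬ M.Adj a b := by
  classical
  intro hab
  obtain ⟨g, hg, hgb⟩ := hb
  have hbA : b ∉ A := fun hbA => hab.ne <| congrArg Subtype.val <|
    f.injective <| Subtype.ext <| hgb.symm.trans (hg ⟨b, hbA⟩ hab.ne.symm)
  have htwin : ∀ x ∈ A, x ≠ a → x ≠ b → (M.Adj a x ↔ M.Adj b x) := fun x hx hxa _ =>
    calc M.Adj a x ↔ M.Adj (f ⟨a, ha⟩) (f ⟨x, hx⟩) :=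
          (f.map_adj_iff (v := ⟨a, ha⟩) (w := ⟨x, hx⟩)).symm
      _ ↔ M.Adj (g b) (g x) := by rw [hgb, hg ⟨x, hx⟩ hxa]
      _ ↔ M.Adj b x := g.map_adj_iff
  obtain ⟨h, hh⟩ := hM.exists_aut_eq_swap (inCommonKInf_of_adj h2 hK hab) hA htwin
  refine hdiff ⟨h.trans g, fun ⟨x, hx⟩ => ?_⟩
  change g (h x) = _
  rw [hh x hx]
  rcases eq_or_ne x a with rfl | hxa
  · rw [Equiv.swap_apply_left, hgb]
  · rw [Equiv.swap_apply_of_ne_of_ne hxa (ne_of_mem_of_not_mem hx hbA), hg ⟨x, hx⟩ hxa]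

theorem stmt18 {V : Type} [Infinite V] (M : SimpleGraph V) (k : ℕ)
    (hM : GeqHom M k) (h1 : IsNHom M 1) (h2 : IsNHom M 2) (hK : HasKInf M)
    (n : ℕ) (hn : ¬ IsNHom M n) (hmin : ∀ m < n, IsNHom M m)
    (A B : Set V) (hA : A.Finite) (hB : B.Finite)
    (hAn : A.ncard = n) (hBn : B.ncard = n)
    (f : M.induce A ≃g M.induce B)
    (hdiff : ¬ ∃ g : M ≃g M, ∀ x : A, g x.val = (f x).val)
    (a : V) (ha : a ∈ A) (b : V)
    (hb : ∃ g : M ≃g M, (∀ x : A, x.val ≠ a → g x.val = (f x).val) ∧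
      g b = (f ⟨a, ha⟩).val) :
    ¬ M.Adj a b :=
  stmt18_general M k hM h2 hK A B hA f hdiff a ha b hb
end
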